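/- arXiv:2504.07546 — 9 statements merged into one kernel-verified Lean document; each statement's English description precedes it below -/
import Mathlib

section
/- Let (P₁, V₁) be a locally convex cone, (P₂, V₂) a full locally convex cone, and f, g, h : P₁ → P₂ mappings satisfying f(x+y) ≤ g(x) + h(y) + v and g(x) + h(y) ≤ f(x+y) + v for some fixed v ∈ V₂ and all x, y ∈ P₁. Then for all x, y ∈ P₁: f(0) + f(x+y) ≤ 4v + f(x) + f(y) and f(x) + f(y) ≤ 4v + f(x+y) + f(0). -/
open scoped NNReal

section Defs
variable {P : Type*} [AddCommMonoid P] [Preorder P]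

/-- The closure of a point: intersection of all its upper neighborhoods. -/
def ptCl (V : Set P) (a : P) : Set P := {b | ∀ v ∈ V, b ≤ a + v}

/-- A locally convex cone is separated if equal closures imply equality. -/
def IsSeparated (V : Set P) : Prop := ∀ a b : P, ptCl V a = ptCl V b → a = b

/-- Abstract 0-neighborhood system. -/
def IsNbhdSystem [SMul ℝ≥0 P] (V : Set P) : Prop :=
  (∀ v ∈ V, 0 < v) ∧
  (∀ u ∈ V, ∀ v ∈ V, ∃ w ∈ V, w ≤ u ∧ w ≤ v) ∧
  (∀ u ∈ V, ∀ v ∈ V, u + v ∈ V) ∧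
  (∀ v ∈ V, ∀ c : ℝ≥0, 0 < c → c • v ∈ V)

/-- Compatibility of the preorder with addition and nonnegative scalar multiplication. -/
def IsOrderedCone (P : Type*) [AddCommMonoid P] [Preorder P] [SMul ℝ≥0 P] : Prop :=
  (∀ a b c : P, a ≤ b → a + c ≤ b + c) ∧
  (∀ (c : ℝ≥0) (a b : P), a ≤ b → c • a ≤ c • b)

/-- All elements are bounded below (full locally convex cone condition). -/
def IsLowerBddCone [SMul ℝ≥0 P] (V : Set P) : Prop :=
  ∀ a : P, ∀ v ∈ V, ∃ ρ : ℝ≥0, 0 < ρ ∧ (0 : P) ≤ a + ρ • v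

/-- An element is bounded: upper and lower bounded. -/
def BoundedElem [SMul ℝ≥0 P] (V : Set P) (a : P) : Prop :=
  (∀ v ∈ V, ∃ c : ℝ≥0, 0 < c ∧ a ≤ c • v) ∧
  (∀ v ∈ V, ∃ ρ : ℝ≥0, 0 < ρ ∧ (0 : P) ≤ a + ρ • v)

/-- Completeness under the symmetric topology: every symmetric Cauchy net converges. -/
def SymComplete (V : Set P) : Prop :=
  ∀ (ι : Type) [Preorder ι] [Nonempty ι], IsDirected ι (· ≤ ·) →
    ∀ a : ι → P, (∀ v ∈ V, ∃ i0, ∀ i j, i0 ≤ i → i0 ≤ j → a i ≤ a j + v) →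
      ∃ l : P, ∀ v ∈ V, ∃ i0, ∀ i, i0 ≤ i → a i ≤ l + v ∧ l ≤ a i + v

end Defs

/-- From the Pexider approximation by `v`, the mapping `f` satisfies
`f(0) + f(x+y) ≤ 4v + f(x) + f(y)` and `f(x) + f(y) ≤ 4v + f(x+y) + f(0)`. -/
theorem pexider_basic_estimates {P₁ P₂ : Type*}
    [AddCommMonoid P₁] [Module ℝ≥0 P₁] [Preorder P₁]
    [AddCommMonoid P₂] [Module ℝ≥0 P₂] [Preorder P₂]
    (V₁ : Set P₁) (V₂ : Set P₂)
    (hoc₁ : IsOrderedCone P₁) (hV₁ : IsNbhdSystem V₁) (hlb₁ : IsLowerBddCone V₁)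
    (hoc₂ : IsOrderedCone P₂) (hV₂ : IsNbhdSystem V₂) (hlb₂ : IsLowerBddCone V₂)
    (f g h : P₁ → P₂) (v : P₂) (hv : v ∈ V₂)
    (happrox : ∀ x y : P₁, f (x + y) ≤ g x + h y + v ∧ g x + h y ≤ f (x + y) + v) :
    ∀ x y : P₁,
      f 0 + f (x + y) ≤ (4 : ℝ≥0) • v + f x + f y ∧
      f x + f y ≤ (4 : ℝ≥0) • v + f (x + y) + f 0 := by
  have addle : ∀ a b c d : P₂, a ≤ b → c ≤ d → a + c ≤ b + d := by
    intro a b c d hab hcd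
    calc a + c ≤ b + c := hoc₂.1 a b c hab
    _ = c + b := add_comm _ _
    _ ≤ d + b := hoc₂.1 c d b hcd
    _ = b + d := add_comm _ _
  have h4 : (4 : ℝ≥0) • v = v + v + v + v := by
    have : (4 : ℝ≥0) = 1 + 1 + 1 + 1 := by norm_num
    rw [this, add_smul, add_smul, add_smul, one_smul]
  intro x y
  have h1 := happrox x y
  have h2 := happrox 0 0
  have h3 := happrox x 0
  have h5 := happrox 0 y
  rw [add_zero] at h2 h3
  rw [zero_add] at h5
  constructor
  · calc f 0 + f (x + y) ≤ (g 0 + h 0 + v) + (g x + h y + v) := addle _ _ _ _ h2.1 h1.1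
      _ = (g x + h 0) + (g 0 + h y) + (v + v) := by abel
      _ ≤ (f x + v) + (f y + v) + (v + v) := hoc₂.1 _ _ _ (addle _ _ _ _ h3.2 h5.2)
      _ = (v + v + v + v) + f x + f y := by abel
      _ = (4 : ℝ≥0) • v + f x + f y := by rw [h4]
  · calc f x + f y ≤ (g x + h 0 + v) + (g 0 + h y + v) := addle _ _ _ _ h3.1 h5.1
      _ = (g x + h y) + (g 0 + h 0) + (v + v) := by abel
      _ ≤ (f (x + y) + v) + (f 0 + v) + (v + v) := hoc₂.1 _ _ _ (addle _ _ _ _ h1.2 h2.2)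
      _ = (v + v + v + v) + f (x + y) + f 0 := by abel
      _ = (4 : ℝ≥0) • v + f (x + y) + f 0 := by rw [h4]
end

section
/- Let (P₁, V₁) be a locally convex cone, (P₂, V₂) a full locally convex cone, f : P₁ → P₂ a mapping, w ∈ V₂, and λ > 0 a real number such that f(2x) ≤ (λ+1)w + 2f(x) and 2f(x) ≤ (λ+1)w + f(2x) for all x ∈ P₁. Then for all x ∈ P₁ and all n ∈ ℕ: (1/2ⁿ)f(2ⁿx) ≤ f(x) + (1 − 1/2ⁿ)(λ+1)w and f(x) ≤ (1/2ⁿ)f(2ⁿx) + (1 − 1/2ⁿ)(λ+1)w. -/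
open scoped NNReal

/-- Iterated doubling estimates:
`(1/2ⁿ) f(2ⁿ x) ≤ f(x) + (1 − 1/2ⁿ)(λ+1)w` and
`f(x) ≤ (1/2ⁿ) f(2ⁿ x) + (1 − 1/2ⁿ)(λ+1)w`. -/
theorem doubling_estimates {P₁ P₂ : Type*}
    [AddCommMonoid P₁] [Module ℝ≥0 P₁] [Preorder P₁]
    [AddCommMonoid P₂] [Module ℝ≥0 P₂] [Preorder P₂]
    (V₁ : Set P₁) (V₂ : Set P₂)
    (hoc₁ : IsOrderedCone P₁) (hV₁ : IsNbhdSystem V₁) (hlb₁ : IsLowerBddCone V₁)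
    (hoc₂ : IsOrderedCone P₂) (hV₂ : IsNbhdSystem V₂) (hlb₂ : IsLowerBddCone V₂)
    (f : P₁ → P₂) (w : P₂) (hw : w ∈ V₂) (lam : ℝ≥0) (hlam : 0 < lam)
    (hyp : ∀ x : P₁,
      f ((2 : ℝ≥0) • x) ≤ (lam + 1) • w + (2 : ℝ≥0) • f x ∧
      (2 : ℝ≥0) • f x ≤ (lam + 1) • w + f ((2 : ℝ≥0) • x)) :
    ∀ (x : P₁) (n : ℕ),
      ((2 : ℝ≥0) ^ n)⁻¹ • f ((2 : ℝ≥0) ^ n • x) ≤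
        f x + (1 - ((2 : ℝ≥0) ^ n)⁻¹) • ((lam + 1) • w) ∧
      f x ≤ ((2 : ℝ≥0) ^ n)⁻¹ • f ((2 : ℝ≥0) ^ n • x) +
        (1 - ((2 : ℝ≥0) ^ n)⁻¹) • ((lam + 1) • w) := by
  obtain ⟨hadd, hsmul⟩ := hoc₂
  have haddl : ∀ a b c : P₂, a ≤ b → c + a ≤ c + b := fun a b c h => by
    simpa [add_comm] using hadd a b c h
  intro x n
  induction n with
  | zero => simp
  | succ n ih =>
    obtain ⟨ih1, ih2⟩ := ih
    set u := (lam + 1) • w with hu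
    set t := ((2 : ℝ≥0) ^ n)⁻¹ with ht
    set c := ((2 : ℝ≥0) ^ (n + 1))⁻¹ with hc
    have h2x : ((2 : ℝ≥0) ^ (n + 1)) • x = (2 : ℝ≥0) • ((2 : ℝ≥0) ^ n • x) := by
      rw [smul_smul, mul_comm, ← pow_succ]
    have hc2 : c * 2 = t := by
      rw [hc, ht, pow_succ, mul_inv]
      rw [mul_assoc]
      norm_num
    have ht1 : t ≤ 1 := by
      rw [ht]
      have h1 : (1 : ℝ≥0) ≤ 2 ^ n := one_le_pow₀ one_le_two
      exact inv_le_one_of_one_le₀ h1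
    have hct : c ≤ t := by
      rw [hc, ht]
      exact inv_anti₀ (pow_pos two_pos n) (pow_le_pow_right₀ one_le_two n.le_succ)
    have hcc : c + c = t := by rw [← hc2]; ring
    have hcle : c ≤ 1 - c := le_tsub_of_add_le_right (hcc ▸ ht1)
    have key : c + (1 - t) = 1 - c := by
      rw [← hcc, tsub_add_eq_tsub_tsub, add_comm, tsub_add_cancel_of_le hcle]
    constructor
    · have h' := hsmul c _ _ (hyp ((2 : ℝ≥0) ^ n • x)).1
      rw [h2x]
      calc c • f ((2 : ℝ≥0) • ((2 : ℝ≥0) ^ n • x))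
          ≤ c • (u + (2 : ℝ≥0) • f ((2 : ℝ≥0) ^ n • x)) := h'
        _ = c • u + t • f ((2 : ℝ≥0) ^ n • x) := by
            rw [smul_add, smul_smul c (2 : ℝ≥0), hc2]
        _ ≤ c • u + (f x + (1 - t) • u) := haddl _ _ _ ih1
        _ = f x + (1 - c) • u := by rw [← key, add_smul]; abel
    · have h' := hsmul c _ _ (hyp ((2 : ℝ≥0) ^ n • x)).2
      rw [smul_add, smul_smul c (2 : ℝ≥0), hc2] at h'
      rw [h2x]
      calc f x ≤ t • f ((2 : ℝ≥0) ^ n • x) + (1 - t) • u := ih2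
        _ ≤ (c • u + c • f ((2 : ℝ≥0) • ((2 : ℝ≥0) ^ n • x))) + (1 - t) • u :=
            hadd _ _ _ h'
        _ = c • f ((2 : ℝ≥0) • ((2 : ℝ≥0) ^ n • x)) + (1 - c) • u := by
            rw [← key, add_smul]; abel
end

section
/- Let (P₁, V₁) be a locally convex cone and (P₂, V₂) a separated full locally convex cone that is complete under the symmetric topology. Suppose f, g, h : P₁ → P₂ satisfy f(x+y) ∈ v(g(x)+h(y))v for some bounded element v ∈ V₂ and all x, y ∈ P₁, and f(0) is bounded. Then there exists a unique additive mapping A : P₁ → P₂ and a positive real δ such that A(x) ∈ (δv)(f(x))(δv), A(x) ∈ (1+δ)v(g(x)+h(0))(1+δ)v, and A(x) ∈ (1+δ)v(h(x)+g(0))(1+δ)v for all x ∈ P₁. -/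
open scoped NNReal

section Aux
variable {P : Type*} [AddCommMonoid P] [Module ℝ≥0 P] [Preorder P]

theorem aux_add_le_add (hoc : IsOrderedCone P) {a b c d : P} (h1 : a ≤ b) (h2 : c ≤ d) :
    a + c ≤ b + d := by
  calc a + c ≤ b + c := hoc.1 a b c h1
    _ = c + b := add_comm _ _
    _ ≤ d + b := hoc.1 c d b h2
    _ = b + d := add_comm _ _

theorem aux_le_add (hoc : IsOrderedCone P) {c : P} (a : P) (h : (0:P) ≤ c) : a ≤ a + c := by
  have := hoc.1 0 c a h
  simpa [add_comm] using this

theorem aux_smul_nonneg (hoc : IsOrderedCone P) {a : P} (h : (0:P) ≤ a) (s : ℝ≥0) :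
    (0:P) ≤ s • a := by
  have := hoc.2 s 0 a h
  simpa using this

theorem aux_smul_mono (hoc : IsOrderedCone P) {a : P} (h : (0:P) ≤ a) {s t : ℝ≥0} (hst : s ≤ t) :
    s • a ≤ t • a := by
  have key : s • a + (t - s) • a = t • a := by
    rw [← add_smul, add_tsub_cancel_of_le hst]
  calc s • a ≤ s • a + (t - s) • a := aux_le_add hoc _ (aux_smul_nonneg hoc h _)
    _ = t • a := key

theorem aux_smul_le_self (hoc : IsOrderedCone P) {a : P} (h : (0:P) ≤ a) {s : ℝ≥0} (hs : s ≤ 1) :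
    s • a ≤ a := by
  have := aux_smul_mono hoc h hs
  simpa using this

theorem aux_eq_of_close (hoc : IsOrderedCone P) {V : Set P} (hV : IsNbhdSystem V)
    (hsep : IsSeparated V) {p q : P} (hcl : ∀ w ∈ V, p ≤ q + w ∧ q ≤ p + w) : p = q := by
  apply hsep
  have main : ∀ p q : P, (∀ w ∈ V, p ≤ q + w) → ptCl V p ⊆ ptCl V q := by
    intro p q hpq b hb w hw
    have hw2 : (2⁻¹ : ℝ≥0) • w ∈ V := hV.2.2.2 w hw 2⁻¹ (by norm_num)
    have h1 : b ≤ p + (2⁻¹:ℝ≥0) • w := hb _ hw2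
    have h2 : p + (2⁻¹:ℝ≥0) • w ≤ (q + (2⁻¹:ℝ≥0) • w) + (2⁻¹:ℝ≥0) • w :=
      hoc.1 _ _ _ (hpq _ hw2)
    have h3 : (q + (2⁻¹:ℝ≥0) • w) + (2⁻¹:ℝ≥0) • w = q + w := by
      rw [add_assoc, ← add_smul]
      have : (2⁻¹ + 2⁻¹ : ℝ≥0) = 1 := by rw [← NNReal.coe_inj]; push_cast; norm_num
      rw [this, one_smul]
    exact le_trans h1 (le_trans h2 h3.le)
  apply Set.Subset.antisymm
  · exact main p q (fun w hw => (hcl w hw).1)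
  · exact main q p (fun w hw => (hcl w hw).2)

end Aux


theorem pexider_stability {P₁ P₂ : Type*}
    [AddCommMonoid P₁] [Module ℝ≥0 P₁] [Preorder P₁]
    [AddCommMonoid P₂] [Module ℝ≥0 P₂] [Preorder P₂]
    (V₁ : Set P₁) (V₂ : Set P₂)
    (hoc₁ : IsOrderedCone P₁) (hV₁ : IsNbhdSystem V₁) (hlb₁ : IsLowerBddCone V₁)
    (hoc₂ : IsOrderedCone P₂) (hV₂ : IsNbhdSystem V₂) (hlb₂ : IsLowerBddCone V₂)
    (hsep : IsSeparated V₂) (hcomp : SymComplete V₂)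
    (f g h : P₁ → P₂) (v : P₂) (hv : v ∈ V₂) (hvbdd : BoundedElem V₂ v)
    (hf0 : BoundedElem V₂ (f 0))
    (happrox : ∀ x y : P₁, f (x + y) ≤ g x + h y + v ∧ g x + h y ≤ f (x + y) + v) :
    ∃ A : P₁ → P₂,
      (∀ x y : P₁, A (x + y) = A x + A y) ∧
      (∃ δ : ℝ≥0, 0 < δ ∧ ∀ x : P₁,
        (A x ≤ f x + δ • v ∧ f x ≤ A x + δ • v) ∧
        (A x ≤ g x + h 0 + (1 + δ) • v ∧ g x + h 0 ≤ A x + (1 + δ) • v) ∧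
        (A x ≤ h x + g 0 + (1 + δ) • v ∧ h x + g 0 ≤ A x + (1 + δ) • v)) ∧
      (∀ A' : P₁ → P₂, (∀ x y : P₁, A' (x + y) = A' x + A' y) →
        (∃ δ' : ℝ≥0, 0 < δ' ∧ ∀ x : P₁, A' x ≤ f x + δ' • v ∧ f x ≤ A' x + δ' • v) →
        A' = A) := by
  classical
  have hv0 : (0:P₂) ≤ v := (hV₂.1 v hv).le
  obtain ⟨c₀, hc₀pos, hc₀⟩ := hf0.1 v hv
  obtain ⟨ρ₀, hρ₀pos, hρ₀⟩ := hf0.2 v hv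
  set μ : ℝ≥0 := 4 + c₀ + ρ₀ with hμdef
  have hfour : ((4:ℝ≥0)) • v = v + v + v + v := by
    rw [show (4:ℝ≥0) = 1 + 1 + 1 + 1 by norm_num, add_smul, add_smul, add_smul, one_smul]
  -- the modified Hyers inequality with a single function f
  have key1 : ∀ x y : P₁, f (x + y) + f 0 ≤ f x + f y + (4:ℝ≥0) • v := by
    intro x y
    have e1 := (happrox x y).1
    have e2 := (happrox 0 0).1
    have e3 : g x + h 0 ≤ f x + v := by simpa using (happrox x 0).2
    have e4 : g 0 + h y ≤ f y + v := by simpa using (happrox 0 y).2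
    calc f (x + y) + f 0 ≤ (g x + h y + v) + (g 0 + h 0 + v) := by
          simpa using aux_add_le_add hoc₂ e1 e2
      _ = (g x + h 0) + (g 0 + h y) + (v + v) := by abel
      _ ≤ (f x + v) + (f y + v) + (v + v) :=
          hoc₂.1 _ _ _ (aux_add_le_add hoc₂ e3 e4)
      _ = f x + f y + (v + v + v + v) := by abel
      _ = f x + f y + (4:ℝ≥0) • v := by rw [hfour]
  have key2 : ∀ x y : P₁, f x + f y ≤ f (x + y) + f 0 + (4:ℝ≥0) • v := by
    intro x y
    have e1 : f x ≤ g x + h 0 + v := by simpa using (happrox x 0).1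
    have e2 : f y ≤ g 0 + h y + v := by simpa using (happrox 0 y).1
    have e3 := (happrox x y).2
    have e4 : g 0 + h 0 ≤ f 0 + v := by simpa using (happrox 0 0).2
    calc f x + f y ≤ (g x + h 0 + v) + (g 0 + h y + v) := aux_add_le_add hoc₂ e1 e2
      _ = (g x + h y) + (g 0 + h 0) + (v + v) := by abel
      _ ≤ (f (x + y) + v) + (f 0 + v) + (v + v) :=
          hoc₂.1 _ _ _ (aux_add_le_add hoc₂ e3 e4)
      _ = f (x + y) + f 0 + (v + v + v + v) := by abel
      _ = f (x + y) + f 0 + (4:ℝ≥0) • v := by rw [hfour]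
  have hμ1 : ∀ x y : P₁, f (x + y) ≤ f x + f y + μ • v := by
    intro x y
    calc f (x + y) ≤ f (x + y) + (f 0 + ρ₀ • v) := aux_le_add hoc₂ _ hρ₀
      _ = (f (x + y) + f 0) + ρ₀ • v := by abel
      _ ≤ (f x + f y + (4:ℝ≥0) • v) + ρ₀ • v := hoc₂.1 _ _ _ (key1 x y)
      _ = f x + f y + ((4:ℝ≥0) + ρ₀) • v := by rw [add_smul]; abel
      _ ≤ f x + f y + μ • v :=
          aux_add_le_add hoc₂ le_rfl (aux_smul_mono hoc₂ hv0 (by rw [hμdef]; calc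
            (4:ℝ≥0) + ρ₀ ≤ 4 + c₀ + ρ₀ := by gcongr; exact le_add_right le_rfl
            _ = μ := rfl))
  have hμ2 : ∀ x y : P₁, f x + f y ≤ f (x + y) + μ • v := by
    intro x y
    calc f x + f y ≤ f (x + y) + f 0 + (4:ℝ≥0) • v := key2 x y
      _ ≤ f (x + y) + c₀ • v + (4:ℝ≥0) • v :=
          hoc₂.1 _ _ _ (aux_add_le_add hoc₂ le_rfl hc₀)
      _ = f (x + y) + (c₀ + (4:ℝ≥0)) • v := by rw [add_smul]; abel
      _ ≤ f (x + y) + μ • v :=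
          aux_add_le_add hoc₂ le_rfl (aux_smul_mono hoc₂ hv0 (by rw [hμdef]; calc
            c₀ + (4:ℝ≥0) ≤ 4 + c₀ + ρ₀ := by rw [add_comm c₀]; exact le_add_right le_rfl
            _ = μ := rfl))
  -- the Hyers sequence
  set a : P₁ → ℕ → P₂ := fun x n => ((2:ℝ≥0)^n)⁻¹ • f ((2:ℝ≥0)^n • x) with ha
  have hsplit : ∀ (n : ℕ) (x : P₁), ((2:ℝ≥0)^(n+1)) • x = (2:ℝ≥0)^n • x + (2:ℝ≥0)^n • x := by
    intro n x
    rw [pow_succ, mul_comm, mul_smul, two_smul]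
  have hs1 : ∀ n : ℕ, ((2:ℝ≥0)^(n+1))⁻¹ + ((2:ℝ≥0)^(n+1))⁻¹ = ((2:ℝ≥0)^n)⁻¹ := by
    intro n
    rw [← NNReal.coe_inj]
    push_cast
    rw [pow_succ]
    field_simp
    ring
  have hcm : ∀ n : ℕ, ((2:ℝ≥0)^n)⁻¹ * μ = μ * (2⁻¹:ℝ≥0)^n := by
    intro n; rw [mul_comm, inv_pow]
  have key_step : ∀ (x : P₁) (n : ℕ),
      a x (n+1) ≤ a x n + (μ * (2⁻¹:ℝ≥0)^(n+1)) • v ∧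
      a x n ≤ a x (n+1) + (μ * (2⁻¹:ℝ≥0)^(n+1)) • v := by
    intro x n
    constructor
    · have e : f ((2:ℝ≥0)^(n+1) • x) ≤ f ((2:ℝ≥0)^n • x) + f ((2:ℝ≥0)^n • x) + μ • v := by
        rw [hsplit n x]; exact hμ1 _ _
      have e2 := hoc₂.2 ((2:ℝ≥0)^(n+1))⁻¹ _ _ e
      have e3 : ((2:ℝ≥0)^(n+1))⁻¹ • (f ((2:ℝ≥0)^n • x) + f ((2:ℝ≥0)^n • x) + μ • v)
          = a x n + (μ * (2⁻¹:ℝ≥0)^(n+1)) • v := by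
        simp only [ha]
        rw [smul_add, smul_add, smul_smul, ← add_smul, hs1 n, hcm (n+1)]
      rw [e3] at e2
      exact e2
    · have e : f ((2:ℝ≥0)^n • x) + f ((2:ℝ≥0)^n • x) ≤ f ((2:ℝ≥0)^(n+1) • x) + μ • v := by
        rw [hsplit n x]; exact hμ2 _ _
      have e2 := hoc₂.2 ((2:ℝ≥0)^(n+1))⁻¹ _ _ e
      have e3 : ((2:ℝ≥0)^(n+1))⁻¹ • (f ((2:ℝ≥0)^n • x) + f ((2:ℝ≥0)^n • x))
          = a x n := by
        simp only [ha]
        rw [smul_add, ← add_smul, hs1 n]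
      have e4 : ((2:ℝ≥0)^(n+1))⁻¹ • (f ((2:ℝ≥0)^(n+1) • x) + μ • v)
          = a x (n+1) + (μ * (2⁻¹:ℝ≥0)^(n+1)) • v := by
        simp only [ha]
        rw [smul_add, smul_smul, hcm (n+1)]
      rw [e3, e4] at e2
      exact e2
  have cauchy_est : ∀ (k n : ℕ) (x : P₁),
      a x (n+k) ≤ a x n + (μ * (2⁻¹:ℝ≥0)^n) • v ∧
      a x n ≤ a x (n+k) + (μ * (2⁻¹:ℝ≥0)^n) • v := by
    intro k
    induction k with
    | zero =>
      intro n x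
      constructor <;> exact aux_le_add hoc₂ _ (aux_smul_nonneg hoc₂ hv0 _)
    | succ k ih =>
      intro n x
      have harith : μ * (2⁻¹:ℝ≥0)^(n+1) + μ * (2⁻¹:ℝ≥0)^(n+1) = μ * (2⁻¹:ℝ≥0)^n := by
        rw [← NNReal.coe_inj]
        push_cast
        rw [pow_succ]
        ring
      have hidx : n + (k + 1) = (n+1) + k := by omega
      constructor
      · calc a x (n+(k+1)) = a x ((n+1)+k) := by rw [hidx]
          _ ≤ a x (n+1) + (μ * (2⁻¹:ℝ≥0)^(n+1)) • v := (ih (n+1) x).1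
          _ ≤ (a x n + (μ * (2⁻¹:ℝ≥0)^(n+1)) • v) + (μ * (2⁻¹:ℝ≥0)^(n+1)) • v :=
              hoc₂.1 _ _ _ (key_step x n).1
          _ = a x n + (μ * (2⁻¹:ℝ≥0)^n) • v := by rw [add_assoc, ← add_smul, harith]
      · calc a x n ≤ a x (n+1) + (μ * (2⁻¹:ℝ≥0)^(n+1)) • v := (key_step x n).2
          _ ≤ (a x ((n+1)+k) + (μ * (2⁻¹:ℝ≥0)^(n+1)) • v) + (μ * (2⁻¹:ℝ≥0)^(n+1)) • v :=
              hoc₂.1 _ _ _ (ih (n+1) x).2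
          _ = a x ((n+1)+k) + (μ * (2⁻¹:ℝ≥0)^n) • v := by rw [add_assoc, ← add_smul, harith]
          _ = a x (n+(k+1)) + (μ * (2⁻¹:ℝ≥0)^n) • v := by rw [hidx]
  -- smallness of geometric multiples of v
  have small : ∀ w ∈ V₂, ∀ C : ℝ≥0, ∃ n0 : ℕ, ∀ n, n0 ≤ n → (C * (2⁻¹:ℝ≥0)^n) • v ≤ w := by
    intro w hw C
    have hw0 : (0:P₂) ≤ w := (hV₂.1 w hw).le
    obtain ⟨c, hcpos, hcv⟩ := hvbdd.1 w hw
    obtain ⟨n0, hn0⟩ : ∃ n0 : ℕ, (C * c : ℝ≥0) < 2 ^ n0 :=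
      pow_unbounded_of_one_lt _ one_lt_two
    refine ⟨n0, fun n hn => ?_⟩
    have hcoef : (C * (2⁻¹:ℝ≥0)^n) * c ≤ 1 := by
      have h1 : (2⁻¹:ℝ≥0)^n ≤ (2⁻¹:ℝ≥0)^n0 :=
        pow_le_pow_of_le_one zero_le (by rw [← NNReal.coe_le_coe]; push_cast; norm_num) hn
      have h2 : (C * (2⁻¹:ℝ≥0)^n) * c = (2⁻¹:ℝ≥0)^n * (C * c) := by ring
      rw [h2]
      calc (2⁻¹:ℝ≥0)^n * (C*c) ≤ (2⁻¹:ℝ≥0)^n0 * (C*c) := mul_le_mul_left h1 _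
        _ ≤ (2⁻¹:ℝ≥0)^n0 * 2^n0 := mul_le_mul_right hn0.le _
        _ = 1 := by rw [inv_pow]; exact inv_mul_cancel₀ (pow_ne_zero _ two_ne_zero)
    calc (C * (2⁻¹:ℝ≥0)^n) • v ≤ (C * (2⁻¹:ℝ≥0)^n) • (c • w) := hoc₂.2 _ _ _ hcv
      _ = ((C * (2⁻¹:ℝ≥0)^n) * c) • w := by rw [smul_smul]
      _ ≤ w := aux_smul_le_self hoc₂ hw0 hcoef
  -- convergence
  have hlim : ∀ x : P₁, ∃ l : P₂, ∀ w ∈ V₂, ∃ i0, ∀ i, i0 ≤ i → a x i ≤ l + w ∧ l ≤ a x i + w := by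
    intro x
    apply hcomp ℕ inferInstance
    intro w hw
    obtain ⟨n0, hn0⟩ := small w hw (2 * μ)
    refine ⟨n0, fun i j hi hj => ?_⟩
    have e1 : a x i ≤ a x n0 + (μ * (2⁻¹:ℝ≥0)^n0) • v := by
      have := (cauchy_est (i - n0) n0 x).1
      rwa [Nat.add_sub_cancel' hi] at this
    have e2 : a x n0 ≤ a x j + (μ * (2⁻¹:ℝ≥0)^n0) • v := by
      have := (cauchy_est (j - n0) n0 x).2
      rwa [Nat.add_sub_cancel' hj] at this
    have e3 : μ * (2⁻¹:ℝ≥0)^n0 + μ * (2⁻¹:ℝ≥0)^n0 = (2 * μ) * (2⁻¹:ℝ≥0)^n0 := by ring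
    calc a x i ≤ a x n0 + (μ * (2⁻¹:ℝ≥0)^n0) • v := e1
      _ ≤ (a x j + (μ * (2⁻¹:ℝ≥0)^n0) • v) + (μ * (2⁻¹:ℝ≥0)^n0) • v := hoc₂.1 _ _ _ e2
      _ = a x j + ((2 * μ) * (2⁻¹:ℝ≥0)^n0) • v := by rw [add_assoc, ← add_smul, e3]
      _ ≤ a x j + w := aux_add_le_add hoc₂ le_rfl (hn0 n0 le_rfl)
  set A : P₁ → P₂ := fun x => (hlim x).choose with hAdef
  have hA : ∀ x : P₁, ∀ w ∈ V₂, ∃ i0, ∀ i, i0 ≤ i → a x i ≤ A x + w ∧ A x ≤ a x i + w :=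
    fun x => (hlim x).choose_spec
  have ha0 : ∀ x : P₁, a x 0 = f x := by
    intro x; simp only [ha]; rw [pow_zero, inv_one, one_smul, one_smul]
  set δ : ℝ≥0 := μ + 1 with hδdef
  -- the main estimate A x ~ f x within δ v
  have hAf : ∀ x : P₁, A x ≤ f x + δ • v ∧ f x ≤ A x + δ • v := by
    intro x
    obtain ⟨i0, hi0⟩ := hA x v hv
    have h1 := hi0 i0 le_rfl
    have h2 := cauchy_est i0 0 x
    rw [zero_add] at h2
    have hc0 : (μ * (2⁻¹:ℝ≥0)^0) = μ := by rw [pow_zero, mul_one]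
    rw [hc0, ha0 x] at h2
    have hδv : δ • v = μ • v + v := by rw [hδdef, add_smul, one_smul]
    constructor
    · calc A x ≤ a x i0 + v := h1.2
        _ ≤ (f x + μ • v) + v := hoc₂.1 _ _ _ h2.1
        _ = f x + δ • v := by rw [hδv]; abel
    · calc f x ≤ a x i0 + μ • v := h2.2
        _ ≤ (A x + v) + μ • v := hoc₂.1 _ _ _ h1.1
        _ = A x + δ • v := by rw [hδv]; abel
  -- additivity
  have hAadd : ∀ x y : P₁, A (x + y) = A x + A y := by
    intro x y
    apply aux_eq_of_close hoc₂ hV₂ hsep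
    intro w hw
    have hu : (4⁻¹:ℝ≥0) • w ∈ V₂ := hV₂.2.2.2 w hw _ (by norm_num)
    set u : P₂ := (4⁻¹:ℝ≥0) • w with hudef
    have hu4 : u + u + u + u = w := by
      rw [hudef, ← add_smul, ← add_smul, ← add_smul]
      have : (4⁻¹ + 4⁻¹ + 4⁻¹ + 4⁻¹ : ℝ≥0) = 1 := by
        rw [← NNReal.coe_inj]; push_cast; norm_num
      rw [this, one_smul]
    obtain ⟨n1, hn1⟩ := small u hu μ
    obtain ⟨i1, hi1⟩ := hA (x+y) u hu
    obtain ⟨i2, hi2⟩ := hA x u hu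
    obtain ⟨i3, hi3⟩ := hA y u hu
    set n : ℕ := max (max i1 i2) (max i3 n1) with hndef
    have hni1 : i1 ≤ n := le_max_of_le_left (le_max_left _ _)
    have hni2 : i2 ≤ n := le_max_of_le_left (le_max_right _ _)
    have hni3 : i3 ≤ n := le_max_of_le_right (le_max_left _ _)
    have hnn1 : n1 ≤ n := le_max_of_le_right (le_max_right _ _)
    have hsmall : (μ * (2⁻¹:ℝ≥0)^n) • v ≤ u := hn1 n hnn1
    have hsplit2 : (2:ℝ≥0)^n • (x + y) = (2:ℝ≥0)^n • x + (2:ℝ≥0)^n • y := smul_add _ _ _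
    have hd1 : a (x+y) n ≤ a x n + a y n + (μ * (2⁻¹:ℝ≥0)^n) • v := by
      have e : f ((2:ℝ≥0)^n • (x+y)) ≤ f ((2:ℝ≥0)^n • x) + f ((2:ℝ≥0)^n • y) + μ • v := by
        rw [hsplit2]; exact hμ1 _ _
      have e2 := hoc₂.2 ((2:ℝ≥0)^n)⁻¹ _ _ e
      have e3 : ((2:ℝ≥0)^n)⁻¹ • (f ((2:ℝ≥0)^n • x) + f ((2:ℝ≥0)^n • y) + μ • v)
          = a x n + a y n + (μ * (2⁻¹:ℝ≥0)^n) • v := by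
        simp only [ha]
        rw [smul_add, smul_add, smul_smul, hcm n]
      rw [e3] at e2
      exact e2
    have hd2 : a x n + a y n ≤ a (x+y) n + (μ * (2⁻¹:ℝ≥0)^n) • v := by
      have e : f ((2:ℝ≥0)^n • x) + f ((2:ℝ≥0)^n • y) ≤ f ((2:ℝ≥0)^n • (x+y)) + μ • v := by
        rw [hsplit2]; exact hμ2 _ _
      have e2 := hoc₂.2 ((2:ℝ≥0)^n)⁻¹ _ _ e
      have e3 : ((2:ℝ≥0)^n)⁻¹ • (f ((2:ℝ≥0)^n • x) + f ((2:ℝ≥0)^n • y))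
          = a x n + a y n := by
        simp only [ha]; rw [smul_add]
      have e4 : ((2:ℝ≥0)^n)⁻¹ • (f ((2:ℝ≥0)^n • (x+y)) + μ • v)
          = a (x+y) n + (μ * (2⁻¹:ℝ≥0)^n) • v := by
        simp only [ha]; rw [smul_add, smul_smul, hcm n]
      rw [e3, e4] at e2
      exact e2
    constructor
    · calc A (x+y) ≤ a (x+y) n + u := (hi1 n hni1).2
        _ ≤ (a x n + a y n + (μ * (2⁻¹:ℝ≥0)^n) • v) + u := hoc₂.1 _ _ _ hd1
        _ ≤ (a x n + a y n + u) + u :=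
            hoc₂.1 _ _ _ (aux_add_le_add hoc₂ le_rfl hsmall)
        _ ≤ ((A x + u) + (A y + u) + u) + u :=
            hoc₂.1 _ _ _ (hoc₂.1 _ _ _
              (aux_add_le_add hoc₂ (hi2 n hni2).1 (hi3 n hni3).1))
        _ = (A x + A y) + (u + u + u + u) := by abel
        _ = A x + A y + w := by rw [hu4]
    · calc A x + A y ≤ (a x n + u) + (a y n + u) :=
            aux_add_le_add hoc₂ (hi2 n hni2).2 (hi3 n hni3).2
        _ = (a x n + a y n) + (u + u) := by abel
        _ ≤ (a (x+y) n + (μ * (2⁻¹:ℝ≥0)^n) • v) + (u + u) := hoc₂.1 _ _ _ hd2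
        _ ≤ (a (x+y) n + u) + (u + u) :=
            hoc₂.1 _ _ _ (aux_add_le_add hoc₂ le_rfl hsmall)
        _ ≤ ((A (x+y) + u) + u) + (u + u) :=
            hoc₂.1 _ _ _ (hoc₂.1 _ _ _ (hi1 n hni1).1)
        _ = A (x+y) + (u + u + u + u) := by abel
        _ = A (x+y) + w := by rw [hu4]
  have hδpos : 0 < δ := by rw [hδdef]; positivity
  have h1δ : ((1:ℝ≥0) + δ) • v = v + δ • v := by rw [add_smul, one_smul]
  refine ⟨A, hAadd, ⟨δ, hδpos, ?_⟩, ?_⟩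
  · intro x
    have hf := hAf x
    have eg1 : f x ≤ g x + h 0 + v := by simpa using (happrox x 0).1
    have eg2 : g x + h 0 ≤ f x + v := by simpa using (happrox x 0).2
    have eh1 : f x ≤ g 0 + h x + v := by simpa using (happrox 0 x).1
    have eh2 : g 0 + h x ≤ f x + v := by simpa using (happrox 0 x).2
    refine ⟨hf, ⟨?_, ?_⟩, ?_, ?_⟩
    · calc A x ≤ f x + δ • v := hf.1
        _ ≤ (g x + h 0 + v) + δ • v := hoc₂.1 _ _ _ eg1
        _ = g x + h 0 + (1 + δ) • v := by rw [h1δ]; abel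
    · calc g x + h 0 ≤ f x + v := eg2
        _ ≤ (A x + δ • v) + v := hoc₂.1 _ _ _ hf.2
        _ = A x + (1 + δ) • v := by rw [h1δ]; abel
    · calc A x ≤ f x + δ • v := hf.1
        _ ≤ (g 0 + h x + v) + δ • v := hoc₂.1 _ _ _ eh1
        _ = h x + g 0 + (1 + δ) • v := by rw [h1δ]; abel
    · calc h x + g 0 = g 0 + h x := by abel
        _ ≤ f x + v := eh2
        _ ≤ (A x + δ • v) + v := hoc₂.1 _ _ _ hf.2
        _ = A x + (1 + δ) • v := by rw [h1δ]; abel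
  · rintro A' hA'add ⟨δ', hδ'pos, hA'f⟩
    have hpow : ∀ (B : P₁ → P₂), (∀ x y : P₁, B (x + y) = B x + B y) →
        ∀ (n : ℕ) (x : P₁), B ((2:ℝ≥0)^n • x) = (2:ℝ≥0)^n • B x := by
      intro B hB n
      induction n with
      | zero => intro x; simp
      | succ n ih =>
        intro x
        have h2 : ((2:ℝ≥0)^n + (2:ℝ≥0)^n) = (2:ℝ≥0)^(n+1) := by ring
        rw [hsplit n x, hB, ih, ← add_smul, h2]
    funext x
    apply aux_eq_of_close hoc₂ hV₂ hsep
    intro w hw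
    obtain ⟨n0, hn0⟩ := small w hw (δ' + δ)
    have hinv : ∀ b : P₂, ((2:ℝ≥0)^n0)⁻¹ • ((2:ℝ≥0)^n0 • b) = b := by
      intro b
      rw [smul_smul, inv_mul_cancel₀ (pow_ne_zero _ two_ne_zero), one_smul]
    have hcoef : ((2:ℝ≥0)^n0)⁻¹ * δ' + ((2:ℝ≥0)^n0)⁻¹ * δ = (δ' + δ) * (2⁻¹:ℝ≥0)^n0 := by
      rw [inv_pow]; ring
    constructor
    · have e1 : A' ((2:ℝ≥0)^n0 • x) ≤ f ((2:ℝ≥0)^n0 • x) + δ' • v := (hA'f _).1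
      have e2 : f ((2:ℝ≥0)^n0 • x) ≤ A ((2:ℝ≥0)^n0 • x) + δ • v := (hAf _).2
      have e3 : A' ((2:ℝ≥0)^n0 • x) ≤ A ((2:ℝ≥0)^n0 • x) + δ • v + δ' • v := by
        calc A' ((2:ℝ≥0)^n0 • x) ≤ f ((2:ℝ≥0)^n0 • x) + δ' • v := e1
          _ ≤ (A ((2:ℝ≥0)^n0 • x) + δ • v) + δ' • v := hoc₂.1 _ _ _ e2
      have e4 := hoc₂.2 ((2:ℝ≥0)^n0)⁻¹ _ _ e3
      rw [hpow A' hA'add n0 x, hpow A hAadd n0 x] at e4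
      rw [smul_add, smul_add, hinv, hinv, smul_smul, smul_smul] at e4
      calc A' x ≤ A x + (((2:ℝ≥0)^n0)⁻¹ * δ) • v + (((2:ℝ≥0)^n0)⁻¹ * δ') • v := e4
        _ = A x + ((δ' + δ) * (2⁻¹:ℝ≥0)^n0) • v := by
            rw [add_assoc, ← add_smul, ← hcoef]; ring_nf
        _ ≤ A x + w := aux_add_le_add hoc₂ le_rfl (hn0 n0 le_rfl)
    · have e1 : A ((2:ℝ≥0)^n0 • x) ≤ f ((2:ℝ≥0)^n0 • x) + δ • v := (hAf _).1
      have e2 : f ((2:ℝ≥0)^n0 • x) ≤ A' ((2:ℝ≥0)^n0 • x) + δ' • v := (hA'f _).2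
      have e3 : A ((2:ℝ≥0)^n0 • x) ≤ A' ((2:ℝ≥0)^n0 • x) + δ' • v + δ • v := by
        calc A ((2:ℝ≥0)^n0 • x) ≤ f ((2:ℝ≥0)^n0 • x) + δ • v := e1
          _ ≤ (A' ((2:ℝ≥0)^n0 • x) + δ' • v) + δ • v := hoc₂.1 _ _ _ e2
      have e4 := hoc₂.2 ((2:ℝ≥0)^n0)⁻¹ _ _ e3
      rw [hpow A' hA'add n0 x, hpow A hAadd n0 x] at e4
      rw [smul_add, smul_add, hinv, hinv, smul_smul, smul_smul] at e4
      calc A x ≤ A' x + (((2:ℝ≥0)^n0)⁻¹ * δ') • v + (((2:ℝ≥0)^n0)⁻¹ * δ) • v := e4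
        _ = A' x + ((δ' + δ) * (2⁻¹:ℝ≥0)^n0) • v := by
            rw [add_assoc, ← add_smul, hcoef]
        _ ≤ A' x + w := aux_add_le_add hoc₂ le_rfl (hn0 n0 le_rfl)
end

section
/- Let (P₁, V₁) be a locally convex cone and let f, g, h : P₁ → ℝ̄ = ℝ ∪ {+∞} (with the standard order, operations, and 0·(+∞) = 0) satisfy |f(x+y) − (g(x)+h(y))| ≤ ε in the sense that f(x+y) ≤ g(x)+h(y)+ε and g(x)+h(y) ≤ f(x+y)+ε, for some ε > 0 and all x, y ∈ P₁, with f(0) < ∞. Then there exists a unique additive mapping A : P₁ → ℝ̄ and a positive real η such that A(x) ≤ f(x)+η and f(x) ≤ A(x)+η, A(x) ≤ g(x)+h(0)+(ε+η) and g(x)+h(0) ≤ A(x)+(ε+η), and A(x) ≤ h(x)+g(0)+(ε+η) and h(x)+g(0) ≤ A(x)+(ε+η), for all x ∈ P₁. -/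
open Filter Topology

private lemma hyers_double {M : Type*} [AddCommMonoid M] (x : M) (n : ℕ) :
    (2^(n+1) : ℕ) • x = (2^n : ℕ) • x + (2^n : ℕ) • x := by
  rw [show (2^(n+1) : ℕ) = 2^n + 2^n by ring, add_nsmul]

private lemma hyers_real {M : Type*} [AddCommMonoid M] (F : M → ℝ) (S : M → Prop)
    (δ : ℝ) (hδ : 0 < δ)
    (hSadd : ∀ x y, S x → S y → S (x + y))
    (hFadd : ∀ x y, S x → S y → |F (x + y) - (F x + F y)| ≤ δ) :
    ∃ A : M → ℝ,
      (∀ x y, S x → S y → A (x + y) = A x + A y) ∧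
      (∀ x, S x → |A x - F x| ≤ δ) ∧
      (∀ x, S x → Tendsto (fun n : ℕ => F ((2^n : ℕ) • x) / 2^n) atTop (𝓝 (A x))) := by
  classical
  set a : M → ℕ → ℝ := fun x n => F ((2^n : ℕ) • x) / 2^n with ha
  have hSpow : ∀ x, S x → ∀ n, S ((2^n : ℕ) • x) := by
    intro x hx n
    induction n with
    | zero => simpa using hx
    | succ n ih => rw [hyers_double]; exact hSadd _ _ ih ih
  have hstep : ∀ x, S x → ∀ n, |a x (n+1) - a x n| ≤ δ / 2^(n+1) := by
    intro x hx n
    have h1 := hFadd _ _ (hSpow x hx n) (hSpow x hx n)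
    rw [← hyers_double] at h1
    have h2 : a x (n+1) - a x n =
        (F ((2^(n+1) : ℕ) • x) - (F ((2^n : ℕ) • x) + F ((2^n : ℕ) • x))) / 2^(n+1) := by
      simp only [ha]
      field_simp
      ring
    rw [h2, abs_div, abs_of_pos (by positivity : (0:ℝ) < (2:ℝ)^(n+1))]
    gcongr
  have hcauchy : ∀ x, S x → CauchySeq (a x) := by
    intro x hx
    apply cauchySeq_of_le_geometric (1/2 : ℝ) (δ/2) (by norm_num)
    intro n
    rw [dist_eq_norm, Real.norm_eq_abs, abs_sub_comm]
    calc |a x (n+1) - a x n| ≤ δ / 2^(n+1) := hstep x hx n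
      _ = δ/2 * (1/2)^n := by rw [div_pow]; ring
  have hlim : ∀ x, S x → ∃ l, Tendsto (a x) atTop (𝓝 l) := fun x hx =>
    cauchySeq_tendsto_of_complete (hcauchy x hx)
  set A : M → ℝ := fun x => if hx : S x then (hlim x hx).choose else 0 with hA
  have htend : ∀ x, ∀ hx : S x, Tendsto (a x) atTop (𝓝 (A x)) := by
    intro x hx
    simp only [hA, dif_pos hx]
    exact (hlim x hx).choose_spec
  have hb : ∀ x, S x → ∀ n, |a x n - F x| ≤ δ - δ/2^n := by
    intro x hx n
    induction n with
    | zero => simp [ha]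
    | succ n ih =>
      calc |a x (n+1) - F x| ≤ |a x (n+1) - a x n| + |a x n - F x| :=
            abs_sub_le (a x (n+1)) (a x n) (F x)
        _ ≤ δ/2^(n+1) + (δ - δ/2^n) := add_le_add (hstep x hx n) ih
        _ = δ - δ/2^(n+1) := by ring
  have habs : ∀ x, S x → |A x - F x| ≤ δ := by
    intro x hx
    have h1 : Tendsto (fun n => |a x n - F x|) atTop (𝓝 (|A x - F x|)) :=
      ((htend x hx).sub tendsto_const_nhds).abs
    refine le_of_tendsto' h1 (fun n => (hb x hx n).trans ?_)
    have : (0:ℝ) ≤ δ/2^n := by positivity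
    linarith
  have hAdd : ∀ x y, S x → S y → A (x + y) = A x + A y := by
    intro x y hx hy
    have hxy := hSadd x y hx hy
    have h1 : Tendsto (fun n => a (x+y) n - (a x n + a y n)) atTop
        (𝓝 (A (x+y) - (A x + A y))) :=
      (htend _ hxy).sub ((htend _ hx).add (htend _ hy))
    have h2 : Tendsto (fun n => a (x+y) n - (a x n + a y n)) atTop (𝓝 0) := by
      apply squeeze_zero_norm (a := fun n : ℕ => δ * (1/2)^n)
      · intro n
        have h3 := hFadd _ _ (hSpow x hx n) (hSpow y hy n)
        have h4 : a (x+y) n - (a x n + a y n) =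
            (F ((2^n:ℕ) • x + (2^n:ℕ) • y) - (F ((2^n:ℕ) • x) + F ((2^n:ℕ) • y)))/2^n := by
          simp only [ha, smul_add]
          ring
        rw [Real.norm_eq_abs, h4, abs_div, abs_of_pos (by positivity : (0:ℝ) < (2:ℝ)^n)]
        calc _ ≤ δ / 2^n := by gcongr
          _ = δ * (1/2)^n := by rw [div_pow, one_pow]; ring
      · have hp := tendsto_pow_atTop_nhds_zero_of_lt_one
          (by norm_num : (0:ℝ) ≤ 1/2) (by norm_num : (1/2:ℝ) < 1)
        simpa using tendsto_const_nhds.mul hp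
    have h5 := tendsto_nhds_unique h1 h2
    linarith
  exact ⟨A, hAdd, habs, fun x hx => htend x hx⟩

private lemma wt_cancel {a b : WithTop ℝ} {c : ℝ} (h : a + (c : WithTop ℝ) ≤ b) :
    a ≤ b + ((-c : ℝ) : WithTop ℝ) := by
  have h2 := add_le_add_left h ((-c : ℝ) : WithTop ℝ)
  calc a = a + (c : WithTop ℝ) + ((-c : ℝ) : WithTop ℝ) := by
        rw [add_assoc, ← WithTop.coe_add, add_neg_cancel, WithTop.coe_zero, add_zero]
    _ ≤ b + ((-c : ℝ) : WithTop ℝ) := h2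

private lemma wt_trans {a b d : WithTop ℝ} {c e : ℝ}
    (h1 : a ≤ b + (c : WithTop ℝ)) (h2 : b ≤ d + (e : WithTop ℝ)) :
    a ≤ d + ((c + e : ℝ) : WithTop ℝ) := by
  calc a ≤ b + (c : WithTop ℝ) := h1
    _ ≤ d + (e : WithTop ℝ) + (c : WithTop ℝ) := add_le_add_left h2 _
    _ = d + ((c + e : ℝ) : WithTop ℝ) := by rw [add_assoc, ← WithTop.coe_add, add_comm e c]

private lemma wt_mono {a b : WithTop ℝ} {c d : ℝ} (h : a ≤ b + (c : WithTop ℝ)) (hcd : c ≤ d) :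
    a ≤ b + (d : WithTop ℝ) :=
  h.trans (add_le_add_right (WithTop.coe_le_coe.2 hcd) b)

private lemma wt_sum {a b a' b' : WithTop ℝ} {c d : ℝ}
    (h1 : a' ≤ a + (c : WithTop ℝ)) (h2 : b' ≤ b + (d : WithTop ℝ)) :
    a' + b' ≤ (a + b) + ((c + d : ℝ) : WithTop ℝ) := by
  calc a' + b' ≤ (a + (c : WithTop ℝ)) + (b + (d : WithTop ℝ)) := add_le_add h1 h2
    _ = (a + b) + ((c + d : ℝ) : WithTop ℝ) := by rw [add_add_add_comm, WithTop.coe_add]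

open scoped NNReal

/-- Stability of the Pexider equation with values in ℝ̄ = ℝ ∪ {+∞}. -/
theorem pexider_stability_ereal {P₁ : Type*}
    [AddCommMonoid P₁] [Module ℝ≥0 P₁] [Preorder P₁]
    (V₁ : Set P₁)
    (hoc₁ : IsOrderedCone P₁) (hV₁ : IsNbhdSystem V₁) (hlb₁ : IsLowerBddCone V₁)
    (f g h : P₁ → WithTop ℝ) (ε : ℝ) (hε : 0 < ε)
    (hf0 : f 0 < ⊤)
    (happrox : ∀ x y : P₁,
      f (x + y) ≤ g x + h y + (ε : WithTop ℝ) ∧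
      g x + h y ≤ f (x + y) + (ε : WithTop ℝ)) :
    ∃ A : P₁ → WithTop ℝ,
      (∀ x y : P₁, A (x + y) = A x + A y) ∧
      (∃ η : ℝ, 0 < η ∧ ∀ x : P₁,
        (A x ≤ f x + (η : WithTop ℝ) ∧ f x ≤ A x + (η : WithTop ℝ)) ∧
        (A x ≤ g x + h 0 + ((ε + η : ℝ) : WithTop ℝ) ∧
          g x + h 0 ≤ A x + ((ε + η : ℝ) : WithTop ℝ)) ∧
        (A x ≤ h x + g 0 + ((ε + η : ℝ) : WithTop ℝ) ∧
          h x + g 0 ≤ A x + ((ε + η : ℝ) : WithTop ℝ))) ∧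
      (∀ A' : P₁ → WithTop ℝ, (∀ x y : P₁, A' (x + y) = A' x + A' y) →
        (∃ η' : ℝ, 0 < η' ∧ ∀ x : P₁,
          A' x ≤ f x + (η' : WithTop ℝ) ∧ f x ≤ A' x + (η' : WithTop ℝ)) →
        A' = A) := by
  classical
  -- finiteness of g 0 and h 0
  have h00 := (happrox 0 0).2
  rw [add_zero] at h00
  have hfε : ∀ c : ℝ, f 0 + (c : WithTop ℝ) ≠ ⊤ := by
    intro c
    obtain ⟨r, hr⟩ := WithTop.ne_top_iff_exists.mp hf0.ne
    rw [← hr, ← WithTop.coe_add]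
    exact WithTop.coe_ne_top
  have hgh : g 0 + h 0 ≠ ⊤ := ne_top_of_le_ne_top (hfε ε) h00
  obtain ⟨G0, hG0⟩ := WithTop.ne_top_iff_exists.mp (WithTop.add_ne_top.mp hgh).1
  obtain ⟨H0, hH0⟩ := WithTop.ne_top_iff_exists.mp (WithTop.add_ne_top.mp hgh).2
  -- approximate domination of g and h by f
  have hg : ∀ x, g x ≤ f x + ((ε - H0 : ℝ) : WithTop ℝ) := by
    intro x
    have h1 := (happrox x 0).2
    rw [add_zero, ← hH0] at h1
    have h2 := wt_cancel h1
    rwa [add_assoc, ← WithTop.coe_add, show ε + -H0 = ε - H0 by ring] at h2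
  have hh : ∀ y, h y ≤ f y + ((ε - G0 : ℝ) : WithTop ℝ) := by
    intro y
    have h1 := (happrox 0 y).2
    rw [zero_add, ← hG0, add_comm ((G0 : ℝ) : WithTop ℝ) (h y)] at h1
    have h2 := wt_cancel h1
    rwa [add_assoc, ← WithTop.coe_add, show ε + -G0 = ε - G0 by ring] at h2
  set δ : ℝ := 3*ε + |G0 + H0| with hδdef
  have hδ : 0 < δ := by positivity
  -- approximate additivity of f
  have hadd₁ : ∀ x y, f (x + y) ≤ f x + f y + (δ : WithTop ℝ) := by
    intro x y
    have h3 := wt_trans (happrox x y).1 (wt_sum (hg x) (hh y))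
    refine wt_mono h3 ?_
    have := neg_abs_le (G0 + H0)
    rw [hδdef]; linarith
  have hadd₂ : ∀ x y, f x + f y ≤ f (x + y) + (δ : WithTop ℝ) := by
    intro x y
    have h1x : f x ≤ g x + ((H0 + ε : ℝ) : WithTop ℝ) := by
      have h1 := (happrox x 0).1
      rwa [add_zero, ← hH0, add_assoc, ← WithTop.coe_add] at h1
    have h1y : f y ≤ h y + ((G0 + ε : ℝ) : WithTop ℝ) := by
      have h1 := (happrox 0 y).1
      rwa [zero_add, ← hG0, add_comm ((G0 : ℝ) : WithTop ℝ) (h y), add_assoc,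
        ← WithTop.coe_add] at h1
    have h3 := wt_trans (wt_sum h1x h1y) (happrox x y).2
    refine wt_mono h3 ?_
    have := le_abs_self (G0 + H0)
    rw [hδdef]; linarith
  -- the finiteness set and real part of f
  set S : P₁ → Prop := fun x => f x ≠ ⊤ with hSdef
  set F : P₁ → ℝ := fun x => WithTop.untopD 0 (f x) with hFdef
  have hcoe : ∀ x, S x → f x = ((F x : ℝ) : WithTop ℝ) := by
    intro x hx
    obtain ⟨r, hr⟩ := WithTop.ne_top_iff_exists.mp hx
    rw [← hr]
    simp [hFdef, ← hr]
  have hSadd : ∀ x y, S x → S y → S (x + y) := by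
    intro x y hx hy
    refine ne_top_of_le_ne_top ?_ (hadd₁ x y)
    rw [hcoe x hx, hcoe y hy, ← WithTop.coe_add, ← WithTop.coe_add]
    exact WithTop.coe_ne_top
  have hSsplit : ∀ x y, S (x + y) → S x ∧ S y := by
    intro x y hxy
    have h1 : f x + f y ≠ ⊤ := by
      refine ne_top_of_le_ne_top ?_ (hadd₂ x y)
      rw [hcoe _ hxy, ← WithTop.coe_add]
      exact WithTop.coe_ne_top
    exact WithTop.add_ne_top.mp h1
  have hFadd : ∀ x y, S x → S y → |F (x + y) - (F x + F y)| ≤ δ := by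
    intro x y hx hy
    have hxy := hSadd x y hx hy
    have h1 := hadd₁ x y
    have h2 := hadd₂ x y
    rw [hcoe x hx, hcoe y hy, hcoe _ hxy, ← WithTop.coe_add, ← WithTop.coe_add,
      WithTop.coe_le_coe] at h1 h2
    exact abs_le.mpr ⟨by linarith, by linarith⟩
  obtain ⟨A₀, hA₀add, hA₀abs, hA₀tend⟩ := hyers_real F S δ hδ hSadd hFadd
  set A : P₁ → WithTop ℝ := fun x => if f x = ⊤ then ⊤ else ((A₀ x : ℝ) : WithTop ℝ) with hAdef
  have hAtop : ∀ x, f x = ⊤ → A x = ⊤ := by intro x hx; simp [hAdef, hx]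
  have hAfin : ∀ x, S x → A x = ((A₀ x : ℝ) : WithTop ℝ) := by
    intro x hx; simp [hAdef, show f x ≠ ⊤ from hx]
  refine ⟨A, ?_, ⟨δ, hδ, ?_⟩, ?_⟩
  · -- additivity
    intro x y
    by_cases hx : f x = ⊤
    · have hxy : f (x + y) = ⊤ := by
        by_contra hc
        exact (hSsplit x y hc).1 hx
      simp [hAdef, hx, hxy]
    · by_cases hy : f y = ⊤
      · have hxy : f (x + y) = ⊤ := by
          by_contra hc
          exact (hSsplit x y hc).2 hy
        simp [hAdef, hy, hxy]
      · have hxy : S (x + y) := hSadd x y hx hy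
        rw [hAfin _ hxy, hAfin _ hx, hAfin _ hy, hA₀add x y hx hy, WithTop.coe_add]
  · -- bounds
    intro x
    by_cases hx : f x = ⊤
    · have hgtop : g x = ⊤ := by
        by_contra hc
        obtain ⟨r, hr⟩ := WithTop.ne_top_iff_exists.mp hc
        have h1 := (happrox x 0).1
        rw [add_zero, ← hH0, ← hr, add_assoc, ← WithTop.coe_add, ← WithTop.coe_add, hx] at h1
        exact (WithTop.coe_ne_top (top_le_iff.mp h1)).elim
      have hhtop : h x = ⊤ := by
        by_contra hc
        obtain ⟨r, hr⟩ := WithTop.ne_top_iff_exists.mp hc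
        have h1 := (happrox 0 x).1
        rw [zero_add, ← hG0, ← hr, add_assoc, ← WithTop.coe_add, ← WithTop.coe_add, hx] at h1
        exact (WithTop.coe_ne_top (top_le_iff.mp h1)).elim
      refine ⟨⟨?_, ?_⟩, ⟨?_, ?_⟩, ⟨?_, ?_⟩⟩ <;>
        simp [hAdef, hx, hgtop, hhtop, top_add]
    · have hfx := hcoe x hx
      have hAx := hAfin x hx
      have habs := abs_le.mp (hA₀abs x hx)
      have b1 : A x ≤ f x + (δ : WithTop ℝ) := by
        rw [hAx, hfx, ← WithTop.coe_add, WithTop.coe_le_coe]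
        linarith [habs.1, habs.2]
      have b2 : f x ≤ A x + (δ : WithTop ℝ) := by
        rw [hAx, hfx, ← WithTop.coe_add, WithTop.coe_le_coe]
        linarith [habs.1, habs.2]
      have hfg : f x ≤ g x + h 0 + (ε : WithTop ℝ) := by
        have h1 := (happrox x 0).1
        rwa [add_zero] at h1
      have hgf : g x + h 0 ≤ f x + (ε : WithTop ℝ) := by
        have h1 := (happrox x 0).2
        rwa [add_zero] at h1
      have hfh : f x ≤ h x + g 0 + (ε : WithTop ℝ) := by
        have h1 := (happrox 0 x).1
        rwa [zero_add, add_comm (g 0) (h x)] at h1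
      have hhf : h x + g 0 ≤ f x + (ε : WithTop ℝ) := by
        have h1 := (happrox 0 x).2
        rwa [zero_add, add_comm (g 0) (h x)] at h1
      refine ⟨⟨b1, b2⟩, ⟨?_, ?_⟩, ⟨?_, ?_⟩⟩
      · exact wt_mono (wt_trans b1 hfg) (by linarith)
      · exact wt_trans hgf b2
      · exact wt_mono (wt_trans b1 hfh) (by linarith)
      · exact wt_trans hhf b2
  · -- uniqueness
    intro A' hA'add hb
    obtain ⟨η', hη', hA'b⟩ := hb
    funext x
    by_cases hx : f x = ⊤
    · have h1 := (hA'b x).2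
      rw [hx] at h1
      have h2 : A' x = ⊤ := by
        by_contra hc
        obtain ⟨r, hr⟩ := WithTop.ne_top_iff_exists.mp hc
        rw [← hr, ← WithTop.coe_add] at h1
        exact WithTop.coe_ne_top (top_le_iff.mp h1)
      rw [h2, hAtop x hx]
    · have hfx := hcoe x hx
      have hA'fin : A' x ≠ ⊤ := by
        refine ne_top_of_le_ne_top ?_ (hA'b x).1
        rw [hfx, ← WithTop.coe_add]
        exact WithTop.coe_ne_top
      obtain ⟨r, hr⟩ := WithTop.ne_top_iff_exists.mp hA'fin
      have hpow : ∀ n : ℕ, A' ((2^n : ℕ) • x) = (((2:ℝ)^n * r : ℝ) : WithTop ℝ) := by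
        intro n
        induction n with
        | zero => simpa using hr.symm
        | succ n ih =>
          rw [hyers_double, hA'add, ih, ← WithTop.coe_add]
          exact_mod_cast congrArg (fun t : ℝ => ((t : ℝ) : WithTop ℝ)) (by ring :
            (2:ℝ)^n * r + (2:ℝ)^n * r = (2:ℝ)^(n+1) * r)
      have hSpow : ∀ n : ℕ, S ((2^n : ℕ) • x) := by
        intro n
        induction n with
        | zero => simpa using hx
        | succ n ih => rw [hyers_double]; exact hSadd _ _ ih ih
      have hrb : ∀ n : ℕ, |(2:ℝ)^n * r - F ((2^n : ℕ) • x)| ≤ η' := by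
        intro n
        have h1 := (hA'b ((2^n : ℕ) • x)).1
        have h2 := (hA'b ((2^n : ℕ) • x)).2
        rw [hpow n, hcoe _ (hSpow n), ← WithTop.coe_add, WithTop.coe_le_coe] at h1 h2
        exact abs_le.mpr ⟨by linarith, by linarith⟩
      have htr : Tendsto (fun n : ℕ => F ((2^n : ℕ) • x) / 2^n) atTop (𝓝 r) := by
        have h0 : Tendsto (fun n : ℕ => F ((2^n : ℕ) • x) / 2^n - r) atTop (𝓝 0) := by
          apply squeeze_zero_norm (a := fun n : ℕ => η' * (1/2)^n)
          · intro n
            have h1 := hrb n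
            have h2 : F ((2^n : ℕ) • x) / 2^n - r =
                -(((2:ℝ)^n * r - F ((2^n : ℕ) • x)) / 2^n) := by
              field_simp
              ring
            rw [Real.norm_eq_abs, h2, abs_neg, abs_div,
              abs_of_pos (by positivity : (0:ℝ) < (2:ℝ)^n)]
            calc _ ≤ η' / 2^n := by gcongr
              _ = η' * (1/2)^n := by rw [div_pow, one_pow]; ring
          · have hp := tendsto_pow_atTop_nhds_zero_of_lt_one
              (by norm_num : (0:ℝ) ≤ 1/2) (by norm_num : (1/2:ℝ) < 1)
            simpa using tendsto_const_nhds.mul hp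
        have := h0.add (tendsto_const_nhds (x := r))
        simpa using this
      have hreq : r = A₀ x := tendsto_nhds_unique htr (hA₀tend x hx)
      rw [← hr, hreq, hAfin x hx]
end

section
/- Let (P₂, V₂) be a separated full uc-cone with generating element v such that P₂ is simultaneously a real vector space. Then the function q : P₂ → [0, +∞] defined by q(a) = inf{μ > 0 : μ⁻¹a ∈ v(0)v}, where v(0)v = {b : b ≤ v and 0 ≤ b + v}, is a norm on P₂. -/
open scoped NNReal

section DefsR
variable {P : Type*} [AddCommGroup P] [Module ℝ P] [Preorder P]

/-- Compatibility of the preorder with addition and nonnegative real scalar multiplication. -/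
def IsOrderedConeR (P : Type*) [AddCommGroup P] [Module ℝ P] [Preorder P] : Prop :=
  (∀ a b c : P, a ≤ b → a + c ≤ b + c) ∧
  (∀ (c : ℝ) (a b : P), 0 ≤ c → a ≤ b → c • a ≤ c • b)

/-- The neighborhood system of a uc-cone generated by `v`. -/
def ucSystem (v : P) : Set P := {w | ∃ l : ℝ, 0 < l ∧ w = l • v}

/-- All elements are bounded below with respect to the generating element `v`. -/
def IsLowerBddConeR (v : P) : Prop := ∀ a : P, ∃ ρ : ℝ, 0 < ρ ∧ (0 : P) ≤ a + ρ • v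

/-- The seminorm/norm associated with a uc-cone which is a real vector space. -/
noncomputable def ucNorm (v : P) (a : P) : ℝ :=
  sInf {μ : ℝ | 0 < μ ∧ μ⁻¹ • a ≤ v ∧ (0 : P) ≤ μ⁻¹ • a + v}

end DefsR

set_option linter.unusedSectionVars false
set_option linter.unusedVariables false

open scoped Pointwise

section Aux
variable {P : Type*} [AddCommGroup P] [Module ℝ P] [Preorder P]

/-- convenient description of the defining set -/
def ucSet (v a : P) : Set ℝ := {μ : ℝ | 0 < μ ∧ a ≤ μ • v ∧ (0 : P) ≤ a + μ • v}

lemma ucNorm_eq_sInf_ucSet (hoc : IsOrderedConeR P) (v a : P) :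
    ucNorm v a = sInf (ucSet v a) := by
  have h1 : ∀ μ : ℝ, 0 < μ → (μ⁻¹ • a ≤ v ↔ a ≤ μ • v) := by
    intro μ hμ
    constructor
    · intro h
      have := hoc.2 μ _ _ hμ.le h
      rwa [smul_inv_smul₀ hμ.ne'] at this
    · intro h
      have := hoc.2 μ⁻¹ _ _ (inv_nonneg.mpr hμ.le) h
      rwa [inv_smul_smul₀ hμ.ne'] at this
  have h2 : ∀ μ : ℝ, 0 < μ → ((0 : P) ≤ μ⁻¹ • a + v ↔ (0 : P) ≤ a + μ • v) := by
    intro μ hμ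
    constructor
    · intro h
      have := hoc.2 μ _ _ hμ.le h
      rwa [smul_zero, smul_add, smul_inv_smul₀ hμ.ne'] at this
    · intro h
      have := hoc.2 μ⁻¹ _ _ (inv_nonneg.mpr hμ.le) h
      rwa [smul_zero, smul_add, inv_smul_smul₀ hμ.ne'] at this
  unfold ucNorm ucSet
  congr 1
  ext μ
  constructor
  · rintro ⟨hμ, ha, hb⟩
    exact ⟨hμ, (h1 μ hμ).1 ha, (h2 μ hμ).1 hb⟩
  · rintro ⟨hμ, ha, hb⟩
    exact ⟨hμ, (h1 μ hμ).2 ha, (h2 μ hμ).2 hb⟩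

variable (hoc : IsOrderedConeR P) {v : P} (hv : (0 : P) < v)

include hoc hv

lemma uc_smul_nonneg : ∀ t : ℝ, 0 ≤ t → (0 : P) ≤ t • v := by
  intro t ht
  simpa using hoc.2 t 0 v ht hv.le

lemma uc_smul_mono : ∀ μ lam : ℝ, μ ≤ lam → μ • v ≤ lam • v := by
  intro μ lam h
  have h0 : (0 : P) ≤ (lam - μ) • v := uc_smul_nonneg hoc hv _ (by linarith)
  have := hoc.1 0 ((lam - μ) • v) (μ • v) h0
  rwa [zero_add, ← add_smul, sub_add_cancel] at this

lemma ucSet_upper {a : P} {μ lam : ℝ} (hμ : μ ∈ ucSet v a) (h : μ ≤ lam) :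
    lam ∈ ucSet v a := by
  obtain ⟨hμ0, h1, h2⟩ := hμ
  have hm : μ • v ≤ lam • v := uc_smul_mono hoc hv μ lam h
  refine ⟨lt_of_lt_of_le hμ0 h, h1.trans hm, h2.trans ?_⟩
  have := hoc.1 _ _ a hm
  simpa [add_comm] using this

lemma ucSet_nonempty (hlb : IsLowerBddConeR v) (a : P) : (ucSet v a).Nonempty := by
  obtain ⟨ρ, hρ, hρa⟩ := hlb a
  obtain ⟨ρ', hρ', hρ'a⟩ := hlb (-a)
  have ha : a ≤ ρ' • v := by
    have := hoc.1 _ _ a hρ'a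
    simpa [add_comm, add_assoc] using this
  refine ⟨ρ + ρ', ⟨by linarith, ?_, ?_⟩⟩
  · exact ha.trans (uc_smul_mono hoc hv ρ' (ρ + ρ') (by linarith))
  · refine hρa.trans ?_
    have := hoc.1 _ _ a (uc_smul_mono hoc hv ρ (ρ + ρ') (by linarith))
    simpa [add_comm] using this

lemma ucSet_bddBelow (a : P) : BddBelow (ucSet v a) :=
  ⟨0, fun μ hμ => hμ.1.le⟩

lemma ucSet_mem_of_lt (hlb : IsLowerBddConeR v) {a : P} {ε : ℝ}
    (hε : sInf (ucSet v a) < ε) : ε ∈ ucSet v a := by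
  obtain ⟨μ, hμ, hμε⟩ := exists_lt_of_csInf_lt (ucSet_nonempty hoc hv hlb a) hε
  exact ucSet_upper hoc hv hμ hμε.le

lemma ucSet_neg (a : P) : ucSet v (-a) = ucSet v a := by
  have key : ∀ b : P, ∀ μ : ℝ, b ≤ μ • v → (0 : P) ≤ -b + μ • v := by
    intro b μ h
    have := hoc.1 _ _ (-b) h
    simpa [add_comm] using this
  have key2 : ∀ b : P, ∀ μ : ℝ, (0 : P) ≤ b + μ • v → -b ≤ μ • v := by
    intro b μ h
    have := hoc.1 _ _ (-b) h
    simpa [add_assoc, add_comm, add_left_comm] using this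
  ext μ
  constructor
  · rintro ⟨h0, h1, h2⟩
    refine ⟨h0, ?_, ?_⟩
    · have := key2 _ _ h2; simpa using this
    · have := key _ _ h1; simpa [add_comm] using this
  · rintro ⟨h0, h1, h2⟩
    refine ⟨h0, key2 _ _ (by simpa using h2), by simpa [add_comm] using key _ _ h1⟩

lemma ucSet_smul_pos {c : ℝ} (hc : 0 < c) (a : P) :
    ucSet v (c • a) = c • ucSet v a := by
  ext μ
  simp only [Set.mem_smul_set]
  constructor
  · rintro ⟨h0, h1, h2⟩
    refine ⟨μ / c, ⟨div_pos h0 hc, ?_, ?_⟩, by rw [smul_eq_mul]; field_simp [hc.ne']⟩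
    · have := hoc.2 c⁻¹ _ _ (inv_nonneg.mpr hc.le) h1
      rw [inv_smul_smul₀ hc.ne', smul_smul] at this
      convert this using 2
      field_simp
    · have := hoc.2 c⁻¹ _ _ (inv_nonneg.mpr hc.le) h2
      rw [smul_zero, smul_add, inv_smul_smul₀ hc.ne', smul_smul] at this
      convert this using 3
      field_simp
  · rintro ⟨ν, ⟨h0, h1, h2⟩, rfl⟩
    refine ⟨by positivity, ?_, ?_⟩
    · have := hoc.2 c _ _ hc.le h1
      simpa [smul_smul] using this
    · have := hoc.2 c _ _ hc.le h2
      simpa [smul_smul] using this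

end Aux

theorem ucNorm_is_norm' {P : Type*} [AddCommGroup P] [Module ℝ P] [Preorder P]
    (v : P) (hoc : IsOrderedConeR P) (hv : (0 : P) < v)
    (hlb : IsLowerBddConeR v) (hsep : IsSeparated (ucSystem v)) :
    (∀ a : P, 0 ≤ ucNorm v a) ∧
    (∀ a : P, ucNorm v a = 0 ↔ a = 0) ∧
    (∀ (c : ℝ) (a : P), ucNorm v (c • a) = |c| * ucNorm v a) ∧
    (∀ a b : P, ucNorm v (a + b) ≤ ucNorm v a + ucNorm v b) := by
  have heq : ∀ a : P, ucNorm v a = sInf (ucSet v a) := ucNorm_eq_sInf_ucSet hoc v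
  have hne : ∀ a : P, (ucSet v a).Nonempty := ucSet_nonempty hoc hv hlb
  have hbdd : ∀ a : P, BddBelow (ucSet v a) := ucSet_bddBelow hoc hv
  have hnonneg : ∀ a : P, 0 ≤ ucNorm v a := by
    intro a; rw [heq]; exact le_csInf (hne a) fun μ hμ => hμ.1.le
  have hmem : ∀ (a : P) (ε : ℝ), ucNorm v a < ε → ε ∈ ucSet v a := by
    intro a ε h; rw [heq] at h; exact ucSet_mem_of_lt hoc hv hlb h
  have hzero : ucNorm v 0 = 0 := by
    refine le_antisymm ?_ (hnonneg 0)
    have key : ∀ ε : ℝ, 0 < ε → ucNorm v 0 ≤ ε := by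
      intro ε hε
      rw [heq]
      refine csInf_le (hbdd 0) ⟨hε, ?_, ?_⟩
      · simpa using uc_smul_nonneg hoc hv ε hε.le
      · simpa using uc_smul_nonneg hoc hv ε hε.le
    by_contra h
    push_neg at h
    linarith [key (ucNorm v 0 / 2) (by linarith)]
  have hdef : ∀ a : P, ucNorm v a = 0 → a = 0 := by
    intro a ha
    have key : ∀ ε : ℝ, 0 < ε → a ≤ ε • v ∧ (0 : P) ≤ a + ε • v := by
      intro ε hε
      have := hmem a ε (by rw [ha]; exact hε)
      exact ⟨this.2.1, this.2.2⟩
    apply hsep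
    ext b
    simp only [ptCl, Set.mem_setOf_eq]
    constructor
    · rintro hb w ⟨l, hl, rfl⟩
      have h1 : b ≤ a + (l / 2) • v := hb _ ⟨l / 2, by linarith, rfl⟩
      have h2 : a + (l / 2) • v ≤ (l / 2) • v + (l / 2) • v :=
        hoc.1 _ _ ((l / 2) • v) (key (l / 2) (by linarith)).1
      have h3 : (l / 2) • v + (l / 2) • v = l • v := by
        rw [← add_smul]; norm_num
      have : b ≤ l • v := h1.trans (h3 ▸ h2)
      simpa using this
    · rintro hb w ⟨l, hl, rfl⟩
      have h1 : b ≤ (l / 2) • v := by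
        simpa using hb _ ⟨l / 2, by linarith, rfl⟩
      have h2 : (l / 2) • v ≤ (a + (l / 2) • v) + (l / 2) • v := by
        simpa using hoc.1 _ _ ((l / 2) • v) (key (l / 2) (by linarith)).2
      have h3 : (a + (l / 2) • v) + (l / 2) • v = a + l • v := by
        have : (l / 2) • v + (l / 2) • v = l • v := by rw [← add_smul]; norm_num
        rw [add_assoc, this]
      exact h1.trans (h3 ▸ h2)
  have hhom : ∀ (c : ℝ) (a : P), ucNorm v (c • a) = |c| * ucNorm v a := by
    intro c a
    rcases eq_or_ne c 0 with rfl | hc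
    · simp [hzero]
    · have habs : ucSet v (c • a) = |c| • ucSet v a := by
        rcases lt_or_gt_of_ne hc with hneg | hpos
        · have h1 : ucSet v (c • a) = ucSet v ((-c) • a) := by
            rw [neg_smul, ucSet_neg hoc hv]
          rw [h1, ucSet_smul_pos hoc hv (show (0:ℝ) < -c by linarith) a, abs_of_neg hneg]
        · rw [ucSet_smul_pos hoc hv hpos a, abs_of_pos hpos]
      rw [heq, heq, habs, Real.sInf_smul_of_nonneg (abs_nonneg c), smul_eq_mul]
  have hadd : ∀ a b : P, ucNorm v (a + b) ≤ ucNorm v a + ucNorm v b := by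
    intro a b
    have mem : ∀ μ ∈ ucSet v a, ∀ ν ∈ ucSet v b, μ + ν ∈ ucSet v (a + b) := by
      rintro μ ⟨hμ0, hμ1, hμ2⟩ ν ⟨hν0, hν1, hν2⟩
      refine ⟨by linarith, ?_, ?_⟩
      · have h1 : a + b ≤ μ • v + b := hoc.1 _ _ b hμ1
        have h2 : μ • v + b ≤ μ • v + ν • v := by
          simpa [add_comm] using hoc.1 _ _ (μ • v) hν1
        have := h1.trans h2
        rwa [← add_smul] at this
      · have h1 : (0 : P) ≤ (b + ν • v) + (a + μ • v) :=
          hμ2.trans (by simpa using hoc.1 _ _ (a + μ • v) hν2)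
        have h2 : (b + ν • v) + (a + μ • v) = (a + b) + (μ + ν) • v := by
          rw [add_smul]; abel
        rwa [h2] at h1
    refine le_of_forall_pos_le_add ?_
    intro ε hε
    obtain ⟨μ, hμ, hμlt⟩ := exists_lt_of_csInf_lt (hne a)
      (show sInf (ucSet v a) < sInf (ucSet v a) + ε / 2 by linarith)
    obtain ⟨ν, hν, hνlt⟩ := exists_lt_of_csInf_lt (hne b)
      (show sInf (ucSet v b) < sInf (ucSet v b) + ε / 2 by linarith)
    have hle := csInf_le (hbdd (a + b)) (mem μ hμ ν hν)
    rw [heq, heq, heq]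
    rw [heq] at *
    linarith
  exact ⟨hnonneg, fun a => ⟨hdef a, fun h => by rw [h, hzero]⟩, hhom, hadd⟩

/-- In a separated full uc-cone which is simultaneously a real vector
space, the functional `q(a) = inf{μ > 0 : μ⁻¹ a ∈ v(0)v}` is a norm. -/
theorem ucNorm_is_norm {P : Type*} [AddCommGroup P] [Module ℝ P] [Preorder P]
    (v : P) (hoc : IsOrderedConeR P) (hv : (0 : P) < v)
    (hlb : IsLowerBddConeR v) (hsep : IsSeparated (ucSystem v)) :
    (∀ a : P, 0 ≤ ucNorm v a) ∧
    (∀ a : P, ucNorm v a = 0 ↔ a = 0) ∧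
    (∀ (c : ℝ) (a : P), ucNorm v (c • a) = |c| * ucNorm v a) ∧
    (∀ a b : P, ucNorm v (a + b) ≤ ucNorm v a + ucNorm v b) :=
  ucNorm_is_norm' v hoc hv hlb hsep
end

section
/- Let (P₁, V₁) be a locally convex cone and let (P₂, V₂) be a separated full uc-cone with generating element v that is simultaneously a real vector space and complete with respect to its symmetric topology. Suppose f, g, h : P₁ → P₂ satisfy f(x+y) ∈ (εv)(g(x)+h(y))(εv) for some ε > 0 and all x, y ∈ P₁. Then there exists a unique additive mapping A : P₁ → P₂ such that for every r > 1 there exist positive constants β, γ, δ with A(x) ∈ ((4rε+β)v)(f(x))((4rε+β)v), A(x) ∈ ((5rε+γ)v)(g(x))((5rε+γ)v), and A(x) ∈ ((5rε+δ)v)(h(x))((5rε+δ)v) for all x ∈ P₁. -/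
open scoped NNReal

section Aux
variable {P : Type*} [AddCommGroup P] [Module ℝ P] [Preorder P]
variable {v : P} (hoc : IsOrderedConeR P) (hv : (0 : P) < v)
include hoc

lemma aux_addr {a b : P} (c : P) (hab : a ≤ b) : a + c ≤ b + c := hoc.1 a b c hab

lemma aux_sub {a b : P} {t : ℝ} : a - b ≤ t • v ↔ a ≤ b + t • v := by
  constructor
  · intro hab
    have := aux_addr hoc b hab
    simpa [sub_add_cancel, add_comm] using this
  · intro hab
    have := aux_addr hoc (c := -b) hab
    simpa [add_assoc, sub_eq_add_neg, add_comm] using this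

include hv

lemma aux_smulv_nonneg {t : ℝ} (ht : 0 ≤ t) : (0 : P) ≤ t • v := by
  simpa using hoc.2 t 0 v ht hv.le

lemma aux_pad {x : P} {s t : ℝ} (hx : x ≤ s • v) (hst : s ≤ t) : x ≤ t • v := by
  have h0 : (0 : P) ≤ (t - s) • v := aux_smulv_nonneg hoc hv (by linarith)
  have h2 : x ≤ x + (t - s) • v := by simpa [add_comm] using aux_addr hoc (c := x) h0
  calc x ≤ x + (t - s) • v := h2
    _ ≤ s • v + (t - s) • v := aux_addr hoc _ hx
    _ = t • v := by rw [← add_smul]; ring_nf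

omit hv

lemma aux_add2 {x y : P} {s t : ℝ} (hx : x ≤ s • v) (hy : y ≤ t • v) :
    x + y ≤ (s + t) • v := by
  calc x + y ≤ s • v + y := aux_addr hoc _ hx
    _ = y + s • v := add_comm _ _
    _ ≤ t • v + s • v := aux_addr hoc _ hy
    _ = (s + t) • v := by rw [← add_smul]; ring_nf

lemma aux_smul_le {c : ℝ} {x : P} {t : ℝ} (hc : 0 ≤ c) (hx : x ≤ t • v) :
    c • x ≤ (c * t) • v := by
  have := hoc.2 c x (t • v) hc hx
  rwa [smul_smul] at this

lemma aux_sep (hsep : IsSeparated (ucSystem v))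
    {a b : P} (hab : ∀ l : ℝ, 0 < l → a - b ≤ l • v ∧ b - a ≤ l • v) : a = b := by
  apply hsep
  ext c
  simp only [ptCl, Set.mem_setOf_eq]
  constructor
  · intro hc w hw
    obtain ⟨l, hl, rfl⟩ := hw
    have h1 : c ≤ a + (l / 2) • v := hc _ ⟨l / 2, by linarith, rfl⟩
    have h2 : a ≤ b + (l / 2) • v := (aux_sub hoc).mp (hab (l / 2) (by linarith)).1
    calc c ≤ a + (l / 2) • v := h1
      _ ≤ (b + (l / 2) • v) + (l / 2) • v := aux_addr hoc _ h2
      _ = b + l • v := by rw [add_assoc, ← add_smul]; ring_nf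
  · intro hc w hw
    obtain ⟨l, hl, rfl⟩ := hw
    have h1 : c ≤ b + (l / 2) • v := hc _ ⟨l / 2, by linarith, rfl⟩
    have h2 : b ≤ a + (l / 2) • v := (aux_sub hoc).mp (hab (l / 2) (by linarith)).2
    calc c ≤ b + (l / 2) • v := h1
      _ ≤ (a + (l / 2) • v) + (l / 2) • v := aux_addr hoc _ h2
      _ = a + l • v := by rw [add_assoc, ← add_smul]; ring_nf

include hv in
lemma aux_bdd (hlb : IsLowerBddConeR v) (e : P) :
    ∃ M : ℝ, 0 < M ∧ e ≤ M • v ∧ -e ≤ M • v := by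
  obtain ⟨ρ, hρ, h1⟩ := hlb e
  obtain ⟨ρ', hρ', h2⟩ := hlb (-e)
  have hn : -e ≤ ρ • v := by
    have := aux_addr hoc (c := -e) h1
    simpa [add_assoc, add_comm, sub_eq_add_neg] using this
  have hp : e ≤ ρ' • v := by
    have := aux_addr hoc (c := e) h2
    simpa [add_assoc, add_comm] using this
  refine ⟨max ρ ρ', lt_of_lt_of_le hρ (le_max_left _ _), ?_, ?_⟩
  · exact aux_pad hoc hv hp (le_max_right _ _)
  · exact aux_pad hoc hv hn (le_max_left _ _)

/-- iterated doubling -/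
def dbl {Q : Type*} [AddCommMonoid Q] : ℕ → Q → Q
  | 0, x => x
  | n + 1, x => dbl n x + dbl n x

omit hoc
lemma dbl_add {Q : Type*} [AddCommMonoid Q] (n : ℕ) (x y : Q) :
    dbl n (x + y) = dbl n x + dbl n y := by
  induction n with
  | zero => rfl
  | succ n ih => simp [dbl, ih]; abel

end Aux


/-- The scaled Hyers sequence. -/
noncomputable def hseq {P₁ P₂ : Type*} [AddCommMonoid P₁] [AddCommGroup P₂] [Module ℝ P₂]
    (F : P₁ → P₂) (n : ℕ) (x : P₁) : P₂ := ((2 : ℝ)⁻¹ ^ n) • F (dbl n x)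

lemma hseq_zero {P₁ P₂ : Type*} [AddCommMonoid P₁] [AddCommGroup P₂] [Module ℝ P₂]
    (F : P₁ → P₂) (x : P₁) : hseq F 0 x = F x := by simp [hseq, dbl]

lemma hyers {P₁ P₂ : Type*} [AddCommMonoid P₁]
    [AddCommGroup P₂] [Module ℝ P₂] [Preorder P₂]
    {v : P₂} (hoc : IsOrderedConeR P₂) (hv : (0 : P₂) < v)
    (hsep : IsSeparated (ucSystem v)) (hcomp : SymComplete (ucSystem v))
    (F : P₁ → P₂) (c : ℝ) (hc : 0 < c)
    (hF : ∀ x y : P₁, F (x + y) - (F x + F y) ≤ c • v ∧ (F x + F y) - F (x + y) ≤ c • v) :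
    ∃ A : P₁ → P₂, (∀ x y, A (x + y) = A x + A y) ∧
      (∀ l : ℝ, c < l → ∀ x, A x - F x ≤ l • v ∧ F x - A x ≤ l • v) ∧
      (∀ A' : P₁ → P₂, (∀ x y, A' (x + y) = A' x + A' y) →
        (∃ C : ℝ, ∀ x, A' x - A x ≤ C • v ∧ A x - A' x ≤ C • v) → A' = A) := by
  classical
  have hpow : ∀ n : ℕ, (0 : ℝ) < (2 : ℝ)⁻¹ ^ n := fun n => by positivity
  have hpmono : ∀ {n m : ℕ}, n ≤ m → ((2 : ℝ)⁻¹) ^ m ≤ ((2 : ℝ)⁻¹) ^ n := fun hnm =>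
    pow_le_pow_of_le_one (by norm_num) (by norm_num) hnm
  -- one-step estimate
  have step : ∀ (x : P₁) (n : ℕ),
      hseq F (n + 1) x - hseq F n x ≤ (c * (2 : ℝ)⁻¹ ^ (n + 1)) • v ∧
      hseq F n x - hseq F (n + 1) x ≤ (c * (2 : ℝ)⁻¹ ^ (n + 1)) • v := by
    intro x n
    have hd : dbl (n + 1) x = dbl n x + dbl n x := rfl
    have hsc : ((2 : ℝ)⁻¹) ^ (n + 1) + ((2 : ℝ)⁻¹) ^ (n + 1) = ((2 : ℝ)⁻¹) ^ n := by
      rw [pow_succ]; ring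
    have heq : hseq F (n + 1) x - hseq F n x =
        ((2 : ℝ)⁻¹ ^ (n + 1)) • (F (dbl n x + dbl n x) - (F (dbl n x) + F (dbl n x))) := by
      simp only [hseq, hd, smul_sub, smul_add]
      rw [← hsc, add_smul]
      try abel
    have heq' : hseq F n x - hseq F (n + 1) x =
        ((2 : ℝ)⁻¹ ^ (n + 1)) • ((F (dbl n x) + F (dbl n x)) - F (dbl n x + dbl n x)) := by
      simp only [hseq, hd, smul_sub, smul_add]
      rw [← hsc, add_smul]
      try abel
    constructor
    · rw [heq, mul_comm]
      exact aux_smul_le hoc (le_of_lt (hpow (n + 1))) (hF (dbl n x) (dbl n x)).1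
    · rw [heq', mul_comm]
      exact aux_smul_le hoc (le_of_lt (hpow (n + 1))) (hF (dbl n x) (dbl n x)).2
  -- telescoping estimate
  have tele : ∀ (x : P₁) (n k : ℕ),
      hseq F (n + k) x - hseq F n x ≤ (c * ((2 : ℝ)⁻¹ ^ n - (2 : ℝ)⁻¹ ^ (n + k))) • v ∧
      hseq F n x - hseq F (n + k) x ≤ (c * ((2 : ℝ)⁻¹ ^ n - (2 : ℝ)⁻¹ ^ (n + k))) • v := by
    intro x n k
    induction k with
    | zero => simp
    | succ k ih =>
      have hsc : c * (2 : ℝ)⁻¹ ^ (n + k + 1) + c * ((2 : ℝ)⁻¹ ^ n - (2 : ℝ)⁻¹ ^ (n + k))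
          = c * ((2 : ℝ)⁻¹ ^ n - (2 : ℝ)⁻¹ ^ (n + (k + 1))) := by
        have : ((2 : ℝ)⁻¹) ^ (n + (k + 1)) = ((2 : ℝ)⁻¹) ^ (n + k) * 2⁻¹ := by
          rw [← pow_succ]; ring_nf
        rw [this]; rw [show n + k + 1 = (n + k) + 1 from rfl, pow_succ]; ring
      constructor
      · have h1 := (step x (n + k)).1
        have h2 := ih.1
        have := aux_add2 hoc h1 h2
        rw [hsc] at this
        have heq : hseq F (n + k + 1) x - hseq F (n + k) x + (hseq F (n + k) x - hseq F n x)
            = hseq F (n + (k + 1)) x - hseq F n x := by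
          rw [show n + (k + 1) = n + k + 1 from rfl]; abel
        rwa [heq] at this
      · have h1 := (step x (n + k)).2
        have h2 := ih.2
        have := aux_add2 hoc h1 h2
        rw [hsc] at this
        have heq : hseq F (n + k) x - hseq F (n + k + 1) x + (hseq F n x - hseq F (n + k) x)
            = hseq F n x - hseq F (n + (k + 1)) x := by
          rw [show n + (k + 1) = n + k + 1 from rfl]; abel
        rwa [heq] at this
  have tele' : ∀ (x : P₁) (n m : ℕ), n ≤ m →
      hseq F m x - hseq F n x ≤ (c * (2 : ℝ)⁻¹ ^ n) • v ∧
      hseq F n x - hseq F m x ≤ (c * (2 : ℝ)⁻¹ ^ n) • v := by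
    intro x n m hnm
    obtain ⟨k, rfl⟩ := Nat.exists_eq_add_of_le hnm
    have hle : c * ((2 : ℝ)⁻¹ ^ n - (2 : ℝ)⁻¹ ^ (n + k)) ≤ c * (2 : ℝ)⁻¹ ^ n := by
      have := (hpow (n + k)).le
      nlinarith
    exact ⟨aux_pad hoc hv (tele x n k).1 hle, aux_pad hoc hv (tele x n k).2 hle⟩
  -- Cauchy property
  have cauchy : ∀ x : P₁, ∀ w ∈ ucSystem v, ∃ i0 : ℕ, ∀ i j, i0 ≤ i → i0 ≤ j →
      hseq F i x ≤ hseq F j x + w := by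
    intro x w hw
    obtain ⟨l, hl, rfl⟩ := hw
    obtain ⟨n0, hn0⟩ := exists_pow_lt_of_lt_one (x := l / c) (y := (2 : ℝ)⁻¹)
      (div_pos hl hc) (by norm_num)
    refine ⟨n0, fun i j hi hj => ?_⟩
    have key : hseq F i x - hseq F j x ≤ (c * (2 : ℝ)⁻¹ ^ n0) • v := by
      rcases le_total j i with hji | hij
      · exact aux_pad hoc hv (tele' x j i hji).1
          (by nlinarith [hpmono hj, (hpow j).le, (hpow n0).le])
      · exact aux_pad hoc hv (tele' x i j hij).2
          (by nlinarith [hpmono hi, (hpow i).le, (hpow n0).le])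
    have hcl : c * (2 : ℝ)⁻¹ ^ n0 ≤ l := by
      have := (lt_div_iff₀ hc).mp hn0
      nlinarith
    exact (aux_sub hoc).mp (aux_pad hoc hv key hcl)
  -- the limit function
  have hlim : ∀ x : P₁, ∃ L : P₂, ∀ w ∈ ucSystem v, ∃ i0 : ℕ, ∀ i, i0 ≤ i →
      hseq F i x ≤ L + w ∧ L ≤ hseq F i x + w := by
    intro x
    exact hcomp ℕ inferInstance (fun n => hseq F n x) (cauchy x)
  choose A hA using hlim
  -- convenient restatement
  have hA2 : ∀ (x : P₁) (l : ℝ), 0 < l → ∃ n0 : ℕ, ∀ n, n0 ≤ n →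
      hseq F n x - A x ≤ l • v ∧ A x - hseq F n x ≤ l • v := by
    intro x l hl
    obtain ⟨n0, hn0⟩ := hA x (l • v) ⟨l, hl, rfl⟩
    exact ⟨n0, fun n hn => ⟨(aux_sub hoc).mpr (hn0 n hn).1, (aux_sub hoc).mpr (hn0 n hn).2⟩⟩
  -- A is close to F
  have hAF : ∀ l : ℝ, c < l → ∀ x, A x - F x ≤ l • v ∧ F x - A x ≤ l • v := by
    intro l hl x
    have hl2 : (0 : ℝ) < (l - c) / 2 := by linarith
    obtain ⟨n0, hn0⟩ := hA2 x ((l - c) / 2) hl2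
    have ht := tele' x 0 n0 (Nat.zero_le n0)
    rw [hseq_zero] at ht
    have hpow0 : c * (2 : ℝ)⁻¹ ^ (0 : ℕ) = c := by norm_num
    rw [hpow0] at ht
    have hb := hn0 n0 le_rfl
    constructor
    · have := aux_add2 hoc hb.2 ht.1
      have heq : A x - hseq F n0 x + (hseq F n0 x - F x) = A x - F x := by abel
      rw [heq] at this
      exact aux_pad hoc hv this (by linarith)
    · have := aux_add2 hoc ht.2 hb.1
      have heq : F x - hseq F n0 x + (hseq F n0 x - A x) = F x - A x := by abel
      rw [heq] at this
      exact aux_pad hoc hv this (by linarith)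
  -- additivity
  have hadd : ∀ x y : P₁, A (x + y) = A x + A y := by
    intro x y
    apply aux_sep hoc hsep
    intro l hl
    obtain ⟨n1, hn1⟩ := exists_pow_lt_of_lt_one (x := l / 2 / c) (y := (2 : ℝ)⁻¹)
      (by positivity) (by norm_num)
    have hl6 : (0 : ℝ) < l / 6 := by linarith
    obtain ⟨na, hna⟩ := hA2 (x + y) (l / 6) hl6
    obtain ⟨nb, hnb⟩ := hA2 x (l / 6) hl6
    obtain ⟨nc, hnc⟩ := hA2 y (l / 6) hl6
    set n := max (max na nb) (max nc n1) with hn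
    have hnaa : na ≤ n := le_trans (le_max_left _ _) (le_max_left _ _)
    have hnbb : nb ≤ n := le_trans (le_max_right _ _) (le_max_left _ _)
    have hncc : nc ≤ n := le_trans (le_max_left _ _) (le_max_right _ _)
    have hn11 : n1 ≤ n := le_trans (le_max_right _ _) (le_max_right _ _)
    have hmid : c * (2 : ℝ)⁻¹ ^ n ≤ l / 2 := by
      have h1 := hpmono hn11
      have h2 := (lt_div_iff₀ hc).mp hn1
      nlinarith [(hpow n).le]
    -- middle term
    have hmid1 : hseq F n (x + y) - (hseq F n x + hseq F n y) ≤ (c * (2 : ℝ)⁻¹ ^ n) • v := by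
      have heq : hseq F n (x + y) - (hseq F n x + hseq F n y) =
          ((2 : ℝ)⁻¹ ^ n) • (F (dbl n x + dbl n y) - (F (dbl n x) + F (dbl n y))) := by
        simp only [hseq, dbl_add, smul_sub, smul_add]
      rw [heq, mul_comm]
      exact aux_smul_le hoc (hpow n).le (hF (dbl n x) (dbl n y)).1
    have hmid2 : (hseq F n x + hseq F n y) - hseq F n (x + y) ≤ (c * (2 : ℝ)⁻¹ ^ n) • v := by
      have heq : (hseq F n x + hseq F n y) - hseq F n (x + y) =
          ((2 : ℝ)⁻¹ ^ n) • ((F (dbl n x) + F (dbl n y)) - F (dbl n x + dbl n y)) := by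
        simp only [hseq, dbl_add, smul_sub, smul_add]
      rw [heq, mul_comm]
      exact aux_smul_le hoc (hpow n).le (hF (dbl n x) (dbl n y)).2
    have ha := hna n hnaa
    have hb := hnb n hnbb
    have hcy := hnc n hncc
    constructor
    · have := aux_add2 hoc (aux_add2 hoc (aux_add2 hoc ha.2 hmid1) hb.1) hcy.1
      have heq : A (x + y) - hseq F n (x + y) + (hseq F n (x + y) - (hseq F n x + hseq F n y))
          + (hseq F n x - A x) + (hseq F n y - A y) = A (x + y) - (A x + A y) := by abel
      rw [heq] at this
      exact aux_pad hoc hv this (by linarith)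
    · have := aux_add2 hoc (aux_add2 hoc (aux_add2 hoc hb.2 hcy.2) hmid2) ha.1
      have heq : A x - hseq F n x + (A y - hseq F n y)
          + (hseq F n x + hseq F n y - hseq F n (x + y)) + (hseq F n (x + y) - A (x + y))
          = A x + A y - A (x + y) := by abel
      rw [heq] at this
      exact aux_pad hoc hv this (by linarith)
  refine ⟨A, hadd, hAF, ?_⟩
  -- uniqueness
  intro A' hA' ⟨C, hC⟩
  have addpow : ∀ (B : P₁ → P₂), (∀ x y, B (x + y) = B x + B y) →
      ∀ (n : ℕ) (x : P₁), B (dbl n x) = ((2 : ℝ) ^ n) • B x := by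
    intro B hB n x
    induction n with
    | zero => simp [dbl]
    | succ n ih =>
      have : B (dbl (n + 1) x) = B (dbl n x) + B (dbl n x) := hB _ _
      rw [this, ih, ← add_smul]
      congr 1
      rw [pow_succ]; ring
  funext x
  apply aux_sep hoc hsep
  intro l hl
  set C' : ℝ := max C 1 with hC'
  have hC'pos : (0 : ℝ) < C' := lt_of_lt_of_le one_pos (le_max_right _ _)
  obtain ⟨n, hn⟩ := exists_pow_lt_of_lt_one (x := l / C') (y := (2 : ℝ)⁻¹)
    (by positivity) (by norm_num)
  have hscale : ∀ z : P₂, ((2 : ℝ)⁻¹ ^ n) • ((2 : ℝ) ^ n) • z = z := by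
    intro z
    rw [smul_smul, ← mul_pow]
    norm_num
  have key1 : A' x - A x = ((2 : ℝ)⁻¹ ^ n) • (A' (dbl n x) - A (dbl n x)) := by
    rw [addpow A' hA' n x, addpow A hadd n x, smul_sub, hscale, hscale]
  have key2 : A x - A' x = ((2 : ℝ)⁻¹ ^ n) • (A (dbl n x) - A' (dbl n x)) := by
    rw [addpow A' hA' n x, addpow A hadd n x, smul_sub, hscale, hscale]
  have hCC : ∀ z : P₁, A' z - A z ≤ C' • v ∧ A z - A' z ≤ C' • v := fun z =>
    ⟨aux_pad hoc hv (hC z).1 (le_max_left _ _), aux_pad hoc hv (hC z).2 (le_max_left _ _)⟩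
  have hfin : (2 : ℝ)⁻¹ ^ n * C' ≤ l := by
    have := (lt_div_iff₀ hC'pos).mp hn
    linarith
  constructor
  · rw [key1]
    exact aux_pad hoc hv (aux_smul_le hoc (hpow n).le (hCC (dbl n x)).1) hfin
  · rw [key2]
    exact aux_pad hoc hv (aux_smul_le hoc (hpow n).le (hCC (dbl n x)).2) hfin


/-- Hyers–Ulam stability of the Pexiderized Cauchy equation with
values in a separated, complete full uc-cone which is a real vector space. -/
theorem pexider_stability_uc {P₁ P₂ : Type*}
    [AddCommMonoid P₁] [Module ℝ≥0 P₁] [Preorder P₁]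
    [AddCommGroup P₂] [Module ℝ P₂] [Preorder P₂]
    (V₁ : Set P₁)
    (hoc₁ : IsOrderedCone P₁) (hV₁ : IsNbhdSystem V₁) (hlb₁ : IsLowerBddCone V₁)
    (v : P₂)
    (hoc₂ : IsOrderedConeR P₂) (hv : (0 : P₂) < v)
    (hlb₂ : IsLowerBddConeR v) (hsep : IsSeparated (ucSystem v))
    (hcomp : SymComplete (ucSystem v))
    (f g h : P₁ → P₂) (ε : ℝ) (hε : 0 < ε)
    (happrox : ∀ x y : P₁,
      f (x + y) ≤ g x + h y + ε • v ∧ g x + h y ≤ f (x + y) + ε • v) :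
    ∃ A : P₁ → P₂,
      (∀ x y : P₁, A (x + y) = A x + A y) ∧
      (∀ r : ℝ, 1 < r → ∃ β γ δ : ℝ, 0 < β ∧ 0 < γ ∧ 0 < δ ∧ ∀ x : P₁,
        (A x ≤ f x + (4 * r * ε + β) • v ∧ f x ≤ A x + (4 * r * ε + β) • v) ∧
        (A x ≤ g x + (5 * r * ε + γ) • v ∧ g x ≤ A x + (5 * r * ε + γ) • v) ∧
        (A x ≤ h x + (5 * r * ε + δ) • v ∧ h x ≤ A x + (5 * r * ε + δ) • v)) ∧
      (∀ A' : P₁ → P₂, (∀ x y : P₁, A' (x + y) = A' x + A' y) →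
        (∀ r : ℝ, 1 < r → ∃ β γ δ : ℝ, 0 < β ∧ 0 < γ ∧ 0 < δ ∧ ∀ x : P₁,
          (A' x ≤ f x + (4 * r * ε + β) • v ∧ f x ≤ A' x + (4 * r * ε + β) • v) ∧
          (A' x ≤ g x + (5 * r * ε + γ) • v ∧ g x ≤ A' x + (5 * r * ε + γ) • v) ∧
          (A' x ≤ h x + (5 * r * ε + δ) • v ∧ h x ≤ A' x + (5 * r * ε + δ) • v)) →
        A' = A) := by
  classical
  -- Cauchy difference estimate for F x = f x - f 0
  have hxy0 : ∀ x : P₁, f x ≤ g x + h 0 + ε • v ∧ g x + h 0 ≤ f x + ε • v := by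
    intro x; have := happrox x 0; rwa [add_zero] at this
  have h0xy : ∀ y : P₁, f y ≤ g 0 + h y + ε • v ∧ g 0 + h y ≤ f y + ε • v := by
    intro y; have := happrox 0 y; rwa [zero_add] at this
  have h00 : f 0 ≤ g 0 + h 0 + ε • v ∧ g 0 + h 0 ≤ f 0 + ε • v := by
    have := happrox 0 0; rwa [add_zero] at this
  have hF4 : ∀ x y : P₁, (f (x + y) - f 0) - ((f x - f 0) + (f y - f 0)) ≤ (4 * ε) • v ∧
      ((f x - f 0) + (f y - f 0)) - (f (x + y) - f 0) ≤ (4 * ε) • v := by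
    intro x y
    have d1 : f (x + y) - (g x + h y) ≤ ε • v := (aux_sub hoc₂).mpr (happrox x y).1
    have d2 : (g x + h 0) - f x ≤ ε • v := (aux_sub hoc₂).mpr (hxy0 x).2
    have d3 : (g 0 + h y) - f y ≤ ε • v := (aux_sub hoc₂).mpr (h0xy y).2
    have d4 : f 0 - (g 0 + h 0) ≤ ε • v := (aux_sub hoc₂).mpr h00.1
    have e1 : (g x + h y) - f (x + y) ≤ ε • v := (aux_sub hoc₂).mpr (happrox x y).2
    have e2 : f x - (g x + h 0) ≤ ε • v := (aux_sub hoc₂).mpr (hxy0 x).1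
    have e3 : f y - (g 0 + h y) ≤ ε • v := (aux_sub hoc₂).mpr (h0xy y).1
    have e4 : (g 0 + h 0) - f 0 ≤ ε • v := (aux_sub hoc₂).mpr h00.2
    constructor
    · have key := aux_add2 hoc₂ (aux_add2 hoc₂ (aux_add2 hoc₂ d1 d2) d3) d4
      have heq : f (x + y) - (g x + h y) + ((g x + h 0) - f x) + ((g 0 + h y) - f y)
          + (f 0 - (g 0 + h 0)) = (f (x + y) - f 0) - ((f x - f 0) + (f y - f 0)) := by abel
      rw [heq] at key
      exact aux_pad hoc₂ hv key (by linarith)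
    · have key := aux_add2 hoc₂ (aux_add2 hoc₂ (aux_add2 hoc₂ e1 e2) e3) e4
      have heq : (g x + h y) - f (x + y) + (f x - (g x + h 0)) + (f y - (g 0 + h y))
          + ((g 0 + h 0) - f 0) = ((f x - f 0) + (f y - f 0)) - (f (x + y) - f 0) := by abel
      rw [heq] at key
      exact aux_pad hoc₂ hv key (by linarith)
  obtain ⟨A, hadd, hAF, huniq⟩ := hyers hoc₂ hv hsep hcomp (fun z => f z - f 0) (4 * ε)
    (by linarith) hF4
  have hAF' : ∀ l : ℝ, 4 * ε < l → ∀ x : P₁,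
      A x - (f x - f 0) ≤ l • v ∧ (f x - f 0) - A x ≤ l • v := hAF
  -- bounds on the constant terms
  obtain ⟨Mf, hMfpos, hMf1, hMf2⟩ := aux_bdd hoc₂ hv hlb₂ (f 0)
  obtain ⟨Mg, hMgpos, hMg1, hMg2⟩ := aux_bdd hoc₂ hv hlb₂ (g 0)
  obtain ⟨Mh, hMhpos, hMh1, hMh2⟩ := aux_bdd hoc₂ hv hlb₂ (h 0)
  have hbounds : ∀ r : ℝ, 1 < r → ∃ β γ δ : ℝ, 0 < β ∧ 0 < γ ∧ 0 < δ ∧ ∀ x : P₁,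
      (A x ≤ f x + (4 * r * ε + β) • v ∧ f x ≤ A x + (4 * r * ε + β) • v) ∧
      (A x ≤ g x + (5 * r * ε + γ) • v ∧ g x ≤ A x + (5 * r * ε + γ) • v) ∧
      (A x ≤ h x + (5 * r * ε + δ) • v ∧ h x ≤ A x + (5 * r * ε + δ) • v) := by
    intro r hr
    have hrε : ε < r * ε := by nlinarith
    have h4r : 4 * ε < 4 * r * ε := by nlinarith
    refine ⟨Mf + 1, Mf + Mh + ε + 1, Mf + Mg + ε + 1, by linarith, by linarith, by linarith,
      fun x => ?_⟩
    have Af1 : A x - f x ≤ (4 * r * ε + Mf) • v := by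
      have := aux_add2 hoc₂ (hAF' (4 * r * ε) h4r x).1 hMf2
      have heq : A x - (f x - f 0) + -f 0 = A x - f x := by abel
      rwa [heq] at this
    have Af2 : f x - A x ≤ (4 * r * ε + Mf) • v := by
      have := aux_add2 hoc₂ (hAF' (4 * r * ε) h4r x).2 hMf1
      have heq : (f x - f 0) - A x + f 0 = f x - A x := by abel
      rwa [heq] at this
    have e2 : f x - (g x + h 0) ≤ ε • v := (aux_sub hoc₂).mpr (hxy0 x).1
    have e2' : (g x + h 0) - f x ≤ ε • v := (aux_sub hoc₂).mpr (hxy0 x).2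
    have e3 : f x - (g 0 + h x) ≤ ε • v := (aux_sub hoc₂).mpr (h0xy x).1
    have e3' : (g 0 + h x) - f x ≤ ε • v := (aux_sub hoc₂).mpr (h0xy x).2
    refine ⟨⟨?_, ?_⟩, ⟨?_, ?_⟩, ⟨?_, ?_⟩⟩
    · exact (aux_sub hoc₂).mp (aux_pad hoc₂ hv Af1 (by linarith))
    · exact (aux_sub hoc₂).mp (aux_pad hoc₂ hv Af2 (by linarith))
    · have := aux_add2 hoc₂ (aux_add2 hoc₂ Af1 e2) hMh1
      have heq : A x - f x + (f x - (g x + h 0)) + h 0 = A x - g x := by abel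
      rw [heq] at this
      exact (aux_sub hoc₂).mp (aux_pad hoc₂ hv this (by linarith))
    · have := aux_add2 hoc₂ (aux_add2 hoc₂ e2' Af2) hMh2
      have heq : (g x + h 0) - f x + (f x - A x) + -h 0 = g x - A x := by abel
      rw [heq] at this
      exact (aux_sub hoc₂).mp (aux_pad hoc₂ hv this (by linarith))
    · have := aux_add2 hoc₂ (aux_add2 hoc₂ Af1 e3) hMg1
      have heq : A x - f x + (f x - (g 0 + h x)) + g 0 = A x - h x := by abel
      rw [heq] at this
      exact (aux_sub hoc₂).mp (aux_pad hoc₂ hv this (by linarith))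
    · have := aux_add2 hoc₂ (aux_add2 hoc₂ e3' Af2) hMg2
      have heq : (g 0 + h x) - f x + (f x - A x) + -g 0 = h x - A x := by abel
      rw [heq] at this
      exact (aux_sub hoc₂).mp (aux_pad hoc₂ hv this (by linarith))
  refine ⟨A, hadd, hbounds, ?_⟩
  intro A' hA'add hA'b
  apply huniq A' hA'add
  obtain ⟨β', γ', δ', hβ', hγ', hδ', hb'⟩ := hA'b 2 one_lt_two
  obtain ⟨β, γ, δ, hβ, hγ, hδ, hb⟩ := hbounds 2 one_lt_two
  refine ⟨(4 * 2 * ε + β') + (4 * 2 * ε + β), fun x => ?_⟩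
  constructor
  · have h1 : A' x - f x ≤ (4 * 2 * ε + β') • v := (aux_sub hoc₂).mpr ((hb' x).1.1)
    have h2 : f x - A x ≤ (4 * 2 * ε + β) • v := (aux_sub hoc₂).mpr ((hb x).1.2)
    have := aux_add2 hoc₂ h1 h2
    have heq : A' x - f x + (f x - A x) = A' x - A x := by abel
    rwa [heq] at this
  · have h1 : A x - f x ≤ (4 * 2 * ε + β) • v := (aux_sub hoc₂).mpr ((hb x).1.1)
    have h2 : f x - A' x ≤ (4 * 2 * ε + β') • v := (aux_sub hoc₂).mpr ((hb' x).1.2)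
    have := aux_add2 hoc₂ h1 h2
    have heq : A x - f x + (f x - A' x) = A x - A' x := by abel
    have heq2 : (4 * 2 * ε + β) + (4 * 2 * ε + β') = (4 * 2 * ε + β') + (4 * 2 * ε + β) := by ring
    rw [heq, heq2] at this
    exact this
end

section
/- Let P₁ be a cone and (X, ‖·‖) a real Banach space, and let f, g, h : P₁ → X satisfy ‖f(x+y) − g(x) − h(y)‖ ≤ ε for some ε > 0 and all x, y ∈ P₁. Then ‖f(2x) − 2f(x) + f(0)‖ ≤ 4ε for all x ∈ P₁, and consequently for all n ≥ m ≥ 0 and x ∈ P₁: ‖(1/2ⁿ⁺¹)f(2ⁿ⁺¹x) − (1/2ᵐ)f(2ᵐx) + Σ_{k=m}^{n} (1/2^{k+1})f(0)‖ ≤ Σ_{k=m}^{n} 2ε/2ᵏ. -/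
open scoped NNReal

/-- Hyers-type estimates for an approximate Pexider equation from a
cone into a real Banach space. -/
theorem hyers_estimates {P₁ X : Type*}
    [AddCommMonoid P₁] [Module ℝ≥0 P₁]
    [NormedAddCommGroup X] [NormedSpace ℝ X] [CompleteSpace X]
    (f g h : P₁ → X) (ε : ℝ) (hε : 0 < ε)
    (happrox : ∀ x y : P₁, ‖f (x + y) - g x - h y‖ ≤ ε) :
    (∀ x : P₁, ‖f ((2 : ℝ≥0) • x) - (2 : ℝ) • f x + f 0‖ ≤ 4 * ε) ∧
    (∀ (x : P₁) (m n : ℕ), m ≤ n →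
      ‖((2 : ℝ) ^ (n + 1))⁻¹ • f ((2 : ℝ≥0) ^ (n + 1) • x)
          - ((2 : ℝ) ^ m)⁻¹ • f ((2 : ℝ≥0) ^ m • x)
          + ∑ k ∈ Finset.Icc m n, ((2 : ℝ) ^ (k + 1))⁻¹ • f 0‖
        ≤ ∑ k ∈ Finset.Icc m n, 2 * ε / 2 ^ k) := by
  have key : ∀ x : P₁, ‖f ((2 : ℝ≥0) • x) - (2 : ℝ) • f x + f 0‖ ≤ 4 * ε := by
    intro x
    have h1 := happrox x x
    have h2 := happrox x 0
    have h3 := happrox 0 x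
    have h4 := happrox 0 0
    have e : f ((2 : ℝ≥0) • x) - (2 : ℝ) • f x + f 0 =
        ((f (x + x) - g x - h x) - (f (x + 0) - g x - h 0))
          - ((f (0 + x) - g 0 - h x) - (f (0 + 0) - g 0 - h 0)) := by
      rw [two_smul, two_smul]
      simp only [add_zero, zero_add, add_zero]
      abel
    rw [e]
    have t1 := norm_sub_le (f (x + x) - g x - h x) (f (x + 0) - g x - h 0)
    have t2 := norm_sub_le (f (0 + x) - g 0 - h x) (f (0 + 0) - g 0 - h 0)
    have t3 := norm_sub_le ((f (x + x) - g x - h x) - (f (x + 0) - g x - h 0))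
      ((f (0 + x) - g 0 - h x) - (f (0 + 0) - g 0 - h 0))
    linarith
  refine ⟨key, ?_⟩
  have step : ∀ (x : P₁) (k : ℕ),
      ‖((2 : ℝ) ^ (k + 1))⁻¹ • f ((2 : ℝ≥0) ^ (k + 1) • x)
        - ((2 : ℝ) ^ k)⁻¹ • f ((2 : ℝ≥0) ^ k • x)
        + ((2 : ℝ) ^ (k + 1))⁻¹ • f 0‖ ≤ 2 * ε / 2 ^ k := by
    intro x k
    have hk := key ((2 : ℝ≥0) ^ k • x)
    have e : ((2 : ℝ) ^ (k + 1))⁻¹ • f ((2 : ℝ≥0) ^ (k + 1) • x)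
        - ((2 : ℝ) ^ k)⁻¹ • f ((2 : ℝ≥0) ^ k • x)
        + ((2 : ℝ) ^ (k + 1))⁻¹ • f 0
        = ((2 : ℝ) ^ (k + 1))⁻¹ •
            (f ((2 : ℝ≥0) • ((2 : ℝ≥0) ^ k • x)) - (2 : ℝ) • f ((2 : ℝ≥0) ^ k • x) + f 0) := by
      have h1 : ((2 : ℝ) ^ (k + 1))⁻¹ * 2 = ((2 : ℝ) ^ k)⁻¹ := by
        rw [pow_succ]; field_simp
      have h2 : (2 : ℝ≥0) ^ (k + 1) • x = (2 : ℝ≥0) • ((2 : ℝ≥0) ^ k • x) := by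
        have : (2 : ℝ≥0) ^ (k + 1) = 2 * 2 ^ k := by ring
        rw [this, mul_smul]
      rw [h2, smul_add, smul_sub, smul_smul ((2 : ℝ) ^ (k + 1))⁻¹ (2 : ℝ), h1]
    rw [e, norm_smul]
    have hpos : (0 : ℝ) < 2 ^ (k + 1) := by positivity
    have : ‖((2 : ℝ) ^ (k + 1))⁻¹‖ = ((2 : ℝ) ^ (k + 1))⁻¹ := by
      rw [Real.norm_eq_abs, abs_of_pos (by positivity)]
    rw [this]
    have heq : ((2 : ℝ) ^ (k + 1))⁻¹ * (4 * ε) = 2 * ε / 2 ^ k := by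
      rw [pow_succ]; field_simp; ring
    calc ((2 : ℝ) ^ (k + 1))⁻¹ * ‖f ((2 : ℝ≥0) • ((2 : ℝ≥0) ^ k • x))
            - (2 : ℝ) • f ((2 : ℝ≥0) ^ k • x) + f 0‖
        ≤ ((2 : ℝ) ^ (k + 1))⁻¹ * (4 * ε) := by
          apply mul_le_mul_of_nonneg_left hk (by positivity)
      _ = 2 * ε / 2 ^ k := heq
  intro x m n hmn
  induction n with
  | zero =>
    interval_cases m
    simpa using step x 0
  | succ n ih =>
    rcases Nat.eq_or_lt_of_le hmn with rfl | hlt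
    · simpa using step x (n + 1)
    · have hmn' : m ≤ n := Nat.lt_succ_iff.mp hlt
      have ihn := ih hmn'
      rw [Finset.sum_Icc_succ_top (Nat.le_succ_of_le hmn'),
        Finset.sum_Icc_succ_top (Nat.le_succ_of_le hmn')]
      have e : ((2 : ℝ) ^ (n + 1 + 1))⁻¹ • f ((2 : ℝ≥0) ^ (n + 1 + 1) • x)
          - ((2 : ℝ) ^ m)⁻¹ • f ((2 : ℝ≥0) ^ m • x)
          + ((∑ k ∈ Finset.Icc m n, ((2 : ℝ) ^ (k + 1))⁻¹ • f 0)
              + ((2 : ℝ) ^ (n + 1 + 1))⁻¹ • f 0)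
          = (((2 : ℝ) ^ (n + 1))⁻¹ • f ((2 : ℝ≥0) ^ (n + 1) • x)
              - ((2 : ℝ) ^ m)⁻¹ • f ((2 : ℝ≥0) ^ m • x)
              + ∑ k ∈ Finset.Icc m n, ((2 : ℝ) ^ (k + 1))⁻¹ • f 0)
            + (((2 : ℝ) ^ (n + 1 + 1))⁻¹ • f ((2 : ℝ≥0) ^ (n + 1 + 1) • x)
              - ((2 : ℝ) ^ (n + 1))⁻¹ • f ((2 : ℝ≥0) ^ (n + 1) • x)
              + ((2 : ℝ) ^ (n + 1 + 1))⁻¹ • f 0) := by abel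
      rw [e]
      exact (norm_add_le _ _).trans (add_le_add ihn (step x (n + 1)))
end

section
/- Let P₁ be a cone and (X, ‖·‖) a real Banach space, and let f : P₁ → X satisfy ‖f(2x) − 2f(x) + f(0)‖ ≤ 4ε for some ε > 0 and all x ∈ P₁. Then the sequence (2⁻ⁿ f(2ⁿx)) converges for every x ∈ P₁, the limit A(x) := limₙ 2⁻ⁿ f(2ⁿx) satisfies ‖A(x) − f(x) + f(0)‖ ≤ 4ε for all x ∈ P₁, and A is the unique function with this property among limits of this form. -/
open scoped NNReal

/-- Convergence of the Hyers sequence `2⁻ⁿ f(2ⁿ x)` in a real Banach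
space, the 4ε-estimate for the limit, and its uniqueness as a limit of this form. -/
theorem hyers_limit {P₁ X : Type*}
    [AddCommMonoid P₁] [Module ℝ≥0 P₁]
    [NormedAddCommGroup X] [NormedSpace ℝ X] [CompleteSpace X]
    (f : P₁ → X) (ε : ℝ) (hε : 0 < ε)
    (happrox : ∀ x : P₁, ‖f ((2 : ℝ≥0) • x) - (2 : ℝ) • f x + f 0‖ ≤ 4 * ε) :
    ∃! A : P₁ → X,
      ∀ x : P₁,
        Filter.Tendsto (fun n : ℕ => ((2 : ℝ) ^ n)⁻¹ • f ((2 : ℝ≥0) ^ n • x))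
          Filter.atTop (nhds (A x)) ∧
        ‖A x - f x + f 0‖ ≤ 4 * ε := by
  classical
  set h : P₁ → X := fun x => f x - f 0 with hh
  set g : P₁ → ℕ → X := fun x n => ((2 : ℝ) ^ n)⁻¹ • h ((2 : ℝ≥0) ^ n • x) with hg
  have hdist : ∀ (x : P₁) (n : ℕ),
      dist (g x n) (g x (n + 1)) ≤ (2 * ε) * (1 / 2) ^ n := by
    intro x n
    have hy := happrox ((2 : ℝ≥0) ^ n • x)
    have hsm : (2 : ℝ≥0) • ((2 : ℝ≥0) ^ n • x) = (2 : ℝ≥0) ^ (n + 1) • x := by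
      rw [smul_smul, ← pow_succ']
    rw [hsm] at hy
    have key : g x (n + 1) - g x n
        = ((2 : ℝ) ^ (n + 1))⁻¹ •
            (f ((2 : ℝ≥0) ^ (n + 1) • x) - (2 : ℝ) • f ((2 : ℝ≥0) ^ n • x) + f 0) := by
      simp only [hg, hh]
      have hc : ((2 : ℝ) ^ n)⁻¹ = (2 : ℝ) * ((2 : ℝ) ^ (n + 1))⁻¹ := by
        rw [pow_succ]; field_simp
      rw [hc]
      module
    rw [dist_comm, dist_eq_norm, key, norm_smul]
    have : ‖((2 : ℝ) ^ (n + 1))⁻¹‖ = ((2 : ℝ) ^ (n + 1))⁻¹ := by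
      rw [Real.norm_eq_abs, abs_of_pos]; positivity
    rw [this]
    calc ((2 : ℝ) ^ (n + 1))⁻¹ * ‖f ((2 : ℝ≥0) ^ (n + 1) • x) - (2 : ℝ) • f ((2 : ℝ≥0) ^ n • x) + f 0‖
        ≤ ((2 : ℝ) ^ (n + 1))⁻¹ * (4 * ε) := by
          apply mul_le_mul_of_nonneg_left hy; positivity
      _ = (2 * ε) * (1 / 2) ^ n := by
          rw [pow_succ]; field_simp; rw [mul_right_comm, ← mul_pow]; norm_num
  have hr : (1 / 2 : ℝ) < 1 := by norm_num
  have hconv : ∀ x : P₁, ∃ a : X, Filter.Tendsto (g x) Filter.atTop (nhds a) := by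
    intro x
    exact ⟨_, (cauchySeq_of_le_geometric (1/2) (2*ε) hr (hdist x)).tendsto_limUnder⟩
  choose A hA using hconv
  have hzero : Filter.Tendsto (fun n : ℕ => ((2 : ℝ) ^ n)⁻¹ • f 0)
      Filter.atTop (nhds 0) := by
    have : Filter.Tendsto (fun n : ℕ => ((2 : ℝ)⁻¹) ^ n) Filter.atTop (nhds 0) :=
      tendsto_pow_atTop_nhds_zero_of_lt_one (by norm_num) (by norm_num)
    have := this.smul_const (f 0)
    simpa [inv_pow] using this
  have htend : ∀ x : P₁,
      Filter.Tendsto (fun n : ℕ => ((2 : ℝ) ^ n)⁻¹ • f ((2 : ℝ≥0) ^ n • x))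
        Filter.atTop (nhds (A x)) := by
    intro x
    have := (hA x).add hzero
    simp only [add_zero] at this
    convert this using 2 with n
    simp only [hg, hh]
    rw [← smul_add]
    congr 1
    abel
  have hbound : ∀ x : P₁, ‖A x - f x + f 0‖ ≤ 4 * ε := by
    intro x
    have := dist_le_of_le_geometric_of_tendsto₀ (1/2) (2*ε) hr (hdist x) (hA x)
    have hg0 : g x 0 = f x - f 0 := by simp [hg, hh]
    rw [hg0, dist_eq_norm] at this
    have h1 : ‖A x - f x + f 0‖ = ‖f x - f 0 - A x‖ := by
      rw [← norm_neg]; congr 1; abel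
    rw [h1]
    calc ‖f x - f 0 - A x‖ ≤ 2 * ε / (1 - 1 / 2) := this
      _ = 4 * ε := by ring
  refine ⟨A, fun x => ⟨htend x, hbound x⟩, ?_⟩
  intro B hB
  funext x
  exact tendsto_nhds_unique (hB x).1 (htend x)
end

section
/- Let (P₂, V₂) be a separated locally convex cone and suppose A, Ã : P₁ → P₂ are both additive mappings from a cone P₁ such that for some bounded element u ∈ V₂ and constants δ, δ̃ > 0: A(x) ≤ f(x) + δu and f(x) ≤ A(x) + δu, and likewise Ã(x) ≤ f(x) + δ̃u and f(x) ≤ Ã(x) + δ̃u for all x ∈ P₁, for some f : P₁ → P₂. Then A = Ã. -/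
open scoped NNReal

private lemma additive_nsmul {P₁ P₂ : Type*} [AddCommMonoid P₁] [AddCommMonoid P₂]
    (A : P₁ → P₂) (hA : ∀ x y : P₁, A (x + y) = A x + A y) (x : P₁) :
    ∀ n : ℕ, A ((n + 1) • x) = (n + 1) • A x := by
  intro n
  induction n with
  | zero => simp
  | succ m ih =>
      rw [succ_nsmul x (m+1), hA, ih, succ_nsmul (A x) (m+1), succ_nsmul (A x) m]

private lemma key_le {P₁ P₂ : Type*} [AddCommMonoid P₁]
    [AddCommMonoid P₂] [Module ℝ≥0 P₂] [Preorder P₂]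
    (V₂ : Set P₂) (hoc₂ : IsOrderedCone P₂) (hV₂ : IsNbhdSystem V₂)
    (u : P₂) (hubdd : BoundedElem V₂ u)
    (A A' : P₁ → P₂)
    (hA : ∀ x y : P₁, A (x + y) = A x + A y)
    (hA' : ∀ x y : P₁, A' (x + y) = A' x + A' y)
    (ε : ℝ≥0) (h1 : ∀ y : P₁, A y ≤ A' y + ε • u) :
    ∀ (x : P₁), ∀ v ∈ V₂, A x ≤ A' x + v := by
  intro x v hv
  obtain ⟨c, hc, hcv⟩ := hubdd.1 v hv
  obtain ⟨n, hn⟩ := pow_unbounded_of_one_lt (ε * c) (one_lt_two : (1:ℝ≥0) < 2)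
  -- N := 2^n, written as m+1
  set N : ℕ := 2 ^ n with hN
  have hNpos : 0 < N := (Nat.pow_pos (by norm_num : 0 < 2) : 0 < 2 ^ n)
  obtain ⟨m, hm⟩ := Nat.exists_eq_add_of_lt hNpos
  have hmN : N = m + 1 := by omega
  have hscale : A x ≤ A' x + ((N : ℝ≥0)⁻¹ * ε) • u := by
    have h2 : A (N • x) ≤ A' (N • x) + ε • u := h1 _
    rw [hmN, additive_nsmul A hA, additive_nsmul A' hA'] at h2
    have h3 := hoc₂.2 ((N : ℝ≥0)⁻¹) _ _ h2
    have hNne : ((N : ℝ≥0)) ≠ 0 := by positivity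
    have e1 : ((N : ℝ≥0)⁻¹) • ((m + 1) • A x) = A x := by
      rw [← Nat.cast_smul_eq_nsmul ℝ≥0, smul_smul, ← hmN]
      rw [inv_mul_cancel₀ hNne, one_smul]
    have e2 : ((N : ℝ≥0)⁻¹) • ((m + 1) • A' x + ε • u)
        = A' x + ((N : ℝ≥0)⁻¹ * ε) • u := by
      rw [smul_add, ← Nat.cast_smul_eq_nsmul ℝ≥0, smul_smul, smul_smul, ← hmN,
        inv_mul_cancel₀ hNne, one_smul]
    rw [e1, e2] at h3
    exact h3
  -- now bound the error term by v
  set t : ℝ≥0 := (N : ℝ≥0)⁻¹ * ε * c with ht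
  have ht1 : t ≤ 1 := by
    have hN2 : ε * c < (N : ℝ≥0) := by
      rw [hN]; push_cast; exact hn
    rw [ht, mul_assoc]
    have hNne : (0:ℝ≥0) < (N : ℝ≥0) := by positivity
    rw [inv_mul_le_iff₀ hNne, mul_one]
    exact hN2.le
  have hstep1 : ((N : ℝ≥0)⁻¹ * ε) • u ≤ t • v := by
    have := hoc₂.2 ((N : ℝ≥0)⁻¹ * ε) _ _ hcv
    rwa [smul_smul] at this
  have hstep2 : t • v ≤ v := by
    have hv0 : (0 : P₂) ≤ v := (hV₂.1 v hv).le
    have h0 : (0 : P₂) ≤ (1 - t) • v := by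
      have := hoc₂.2 (1 - t) _ _ hv0
      rwa [smul_zero] at this
    calc t • v = t • v + 0 := by rw [add_zero]
      _ ≤ 0 + (1 - t) • v + t • v := by
          rw [zero_add, add_comm]
          exact hoc₂.1 _ _ _ h0
      _ = ((1 - t) + t) • v := by rw [zero_add, add_smul]
      _ = v := by rw [tsub_add_cancel_of_le ht1, one_smul]
  calc A x ≤ A' x + ((N : ℝ≥0)⁻¹ * ε) • u := hscale
    _ ≤ A' x + v := by
        rw [add_comm (A' x), add_comm (A' x)]
        exact hoc₂.1 _ _ _ (hstep1.trans hstep2)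

/-- Uniqueness of additive approximants: two additive mappings within a
bounded distance of the same `f` into a separated locally convex cone coincide. -/
theorem additive_approximant_unique {P₁ P₂ : Type*}
    [AddCommMonoid P₁] [Module ℝ≥0 P₁]
    [AddCommMonoid P₂] [Module ℝ≥0 P₂] [Preorder P₂]
    (V₂ : Set P₂)
    (hoc₂ : IsOrderedCone P₂) (hV₂ : IsNbhdSystem V₂) (hsep : IsSeparated V₂)
    (u : P₂) (hu : u ∈ V₂) (hubdd : BoundedElem V₂ u)
    (f A A' : P₁ → P₂)
    (hA : ∀ x y : P₁, A (x + y) = A x + A y)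
    (hA' : ∀ x y : P₁, A' (x + y) = A' x + A' y)
    (δ δ' : ℝ≥0) (hδ : 0 < δ) (hδ' : 0 < δ')
    (hAf : ∀ x : P₁, A x ≤ f x + δ • u ∧ f x ≤ A x + δ • u)
    (hA'f : ∀ x : P₁, A' x ≤ f x + δ' • u ∧ f x ≤ A' x + δ' • u) :
    A = A' := by
  -- error estimates between A and A'
  have hE : ∀ y : P₁, A y ≤ A' y + (δ' + δ) • u := by
    intro y
    calc A y ≤ f y + δ • u := (hAf y).1
      _ ≤ (A' y + δ' • u) + δ • u := hoc₂.1 _ _ _ (hA'f y).2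
      _ = A' y + (δ' + δ) • u := by rw [add_assoc, ← add_smul]
  have hE' : ∀ y : P₁, A' y ≤ A y + (δ + δ') • u := by
    intro y
    calc A' y ≤ f y + δ' • u := (hA'f y).1
      _ ≤ (A y + δ • u) + δ' • u := hoc₂.1 _ _ _ (hAf y).2
      _ = A y + (δ + δ') • u := by rw [add_assoc, ← add_smul]
  have k1 := key_le V₂ hoc₂ hV₂ u hubdd A A' hA hA' _ hE
  have k2 := key_le V₂ hoc₂ hV₂ u hubdd A' A hA' hA _ hE'
  have half : ∀ v ∈ V₂, ∃ w ∈ V₂, w + w = v := by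
    intro v hv
    refine ⟨(2 : ℝ≥0)⁻¹ • v, hV₂.2.2.2 v hv _ (by norm_num), ?_⟩
    have h2 : (2 : ℝ≥0)⁻¹ + (2 : ℝ≥0)⁻¹ = 1 := by rw [← two_mul, mul_inv_cancel₀ two_ne_zero]
    rw [← add_smul, h2, one_smul]
  funext x
  apply hsep
  ext b
  simp only [ptCl, Set.mem_setOf_eq]
  constructor
  · intro hb v hv
    obtain ⟨w, hw, hww⟩ := half v hv
    calc b ≤ A x + w := hb w hw
      _ ≤ (A' x + w) + w := hoc₂.1 _ _ _ (k1 x w hw)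
      _ = A' x + v := by rw [add_assoc, hww]
  · intro hb v hv
    obtain ⟨w, hw, hww⟩ := half v hv
    calc b ≤ A' x + w := hb w hw
      _ ≤ (A x + w) + w := hoc₂.1 _ _ _ (k2 x w hw)
      _ = A x + v := by rw [add_assoc, hww]
end
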